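/- arXiv:1409.5819 — 11 statements merged into one kernel-verified Lean document; each statement's English description precedes it below -/
import Mathlib

section
/- Let V : [0,∞) → ℝ be continuous, let γ > 0 and g be real numbers, and let k ∈ ℂ. Suppose ψ : [0,∞) → ℝ is twice differentiable with ψ''(x) = (V(x) + γ²)ψ(x) for all x ≥ 0, and φ : [0,∞) → ℂ is twice differentiable with φ''(x) = (V(x) − k²)φ(x) for all x ≥ 0, and suppose φ and ψ satisfy the same boundary condition at the origin in the sense that φ(0)ψ'(0) = φ'(0)ψ(0). Define W(x) = 1 + g²∫₀ˣ ψ(y)² dy (so W(x) ≥ 1 > 0), the transformed potential Ṽ(x) = V(x) − d/dx[2g²ψ(x)²/W(x)], and the transformed solution φ̃(x) = φ(x) − g²ψ(x)(∫₀ˣ φ(y)ψ(y) dy)/W(x). Then φ̃ is twice differentiable on [0,∞) and satisfies φ̃''(x) = (Ṽ(x) − k²)φ̃(x) for all x ≥ 0; moreover φ̃(0) = φ(0) and φ̃'(0) = φ'(0) − g²ψ(0)²φ(0). -/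
open Set MeasureTheory intervalIntegral Filter Topology

private lemma ofReal_hasDerivWithinAt {f : ℝ → ℝ} {f' x : ℝ} {s : Set ℝ}
    (h : HasDerivWithinAt f f' s x) :
    HasDerivWithinAt (fun y => ((f y : ℝ) : ℂ)) ((f' : ℝ) : ℂ) s x :=
  Complex.ofRealCLM.hasFDerivAt.comp_hasDerivWithinAt x h

private lemma ftc_Ici {E : Type*} [NormedAddCommGroup E] [NormedSpace ℝ E] [CompleteSpace E]
    {f : ℝ → E} (hc : ContinuousOn f (Ici 0)) {x : ℝ} (hx : x ∈ Ici (0:ℝ)) :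
    HasDerivWithinAt (fun t => ∫ y in (0:ℝ)..t, f y) (f x) (Ici 0) x := by
  rcases eq_or_lt_of_le (mem_Ici.mp hx) with h0 | h0
  · cases h0
    exact intervalIntegral.integral_hasDerivWithinAt_right (by simp)
      ((hc.stronglyMeasurableAtFilter_nhdsWithin measurableSet_Ici 0).filter_mono
        (nhdsWithin_mono _ Ioi_subset_Ici_self))
      ((hc 0 self_mem_Ici).mono Ioi_subset_Ici_self)
  · have hmem : Ici (0:ℝ) ∈ 𝓝 x := Ici_mem_nhds h0
    have hm : StronglyMeasurableAtFilter f (𝓝 x) volume := by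
      have := hc.stronglyMeasurableAtFilter_nhdsWithin (μ := volume) measurableSet_Ici x
      rwa [nhdsWithin_eq_nhds.2 hmem] at this
    exact ((intervalIntegral.integral_hasDerivAt_right
      ((hc.mono (by rw [uIcc_of_le hx]; exact Icc_subset_Ici_self)).intervalIntegrable)
      hm ((hc x hx).continuousAt hmem)).hasDerivWithinAt)

private lemma const_of_deriv_zero {f : ℝ → ℂ}
    (hf : ∀ x ∈ Ici (0:ℝ), HasDerivWithinAt f 0 (Ici 0) x) {x : ℝ} (hx : x ∈ Ici (0:ℝ)) :
    f x = f 0 := by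
  apply (convex_Ici (0:ℝ)).is_const_of_fderivWithin_eq_zero (𝕜 := ℝ)
    (fun y hy => (hf y hy).differentiableWithinAt) ?_ hx self_mem_Ici
  intro y hy
  have h0 : (ContinuousLinearMap.toSpanSingleton ℝ (0:ℂ)) = 0 := by ext1; simp
  have := (hf y hy).hasFDerivWithinAt.fderivWithin ((uniqueDiffOn_Ici 0) y hy)
  rw [this, h0]

private lemma core_lemma
    (V : ℝ → ℝ) (γ g : ℝ) (k : ℂ) (ψ : ℝ → ℝ) (φ : ℝ → ℂ)
    (W Vt : ℝ → ℝ) (φt : ℝ → ℂ) (P : ℝ → ℂ)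
    (hψ : ∀ x ∈ Ici (0 : ℝ), DifferentiableWithinAt ℝ ψ (Ici 0) x)
    (hψ' : ∀ x ∈ Ici (0 : ℝ),
      DifferentiableWithinAt ℝ (fun y => derivWithin ψ (Ici 0) y) (Ici 0) x)
    (hψ'' : ∀ x ∈ Ici (0 : ℝ),
      derivWithin (fun y => derivWithin ψ (Ici 0) y) (Ici 0) x = (V x + γ ^ 2) * ψ x)
    (hφ : ∀ x ∈ Ici (0 : ℝ), DifferentiableWithinAt ℝ φ (Ici 0) x)
    (hφ' : ∀ x ∈ Ici (0 : ℝ),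
      DifferentiableWithinAt ℝ (fun y => derivWithin φ (Ici 0) y) (Ici 0) x)
    (hφ'' : ∀ x ∈ Ici (0 : ℝ),
      derivWithin (fun y => derivWithin φ (Ici 0) y) (Ici 0) x = ((V x : ℂ) - k ^ 2) * φ x)
    (hPder : ∀ x ∈ Ici (0:ℝ), HasDerivWithinAt P (φ x * ((ψ x : ℝ) : ℂ)) (Ici 0) x)
    (hP0 : P 0 = 0)
    (hWder : ∀ x ∈ Ici (0:ℝ), HasDerivWithinAt W (g ^ 2 * ψ x ^ 2) (Ici 0) x)
    (hWpos : ∀ x ∈ Ici (0:ℝ), 0 < W x)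
    (hW0 : W 0 = 1)
    (hrel : ∀ x ∈ Ici (0:ℝ),
      derivWithin φ (Ici 0) x * ((ψ x : ℝ) : ℂ) - φ x * ((derivWithin ψ (Ici 0) x : ℝ) : ℂ)
        = -(k ^ 2 + ((γ : ℝ) : ℂ) ^ 2) * P x)
    (hVt : ∀ x, Vt x = V x - derivWithin (fun y => 2 * g ^ 2 * ψ y ^ 2 / W y) (Ici 0) x)
    (hφtP : ∀ x, φt x = φ x - ((g ^ 2 * ψ x : ℝ) : ℂ) * P x / ((W x : ℝ) : ℂ)) :
    (∀ x ∈ Ici (0 : ℝ), DifferentiableWithinAt ℝ φt (Ici 0) x) ∧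
    (∀ x ∈ Ici (0 : ℝ),
      DifferentiableWithinAt ℝ (fun y => derivWithin φt (Ici 0) y) (Ici 0) x) ∧
    (∀ x ∈ Ici (0 : ℝ),
      derivWithin (fun y => derivWithin φt (Ici 0) y) (Ici 0) x = ((Vt x : ℂ) - k ^ 2) * φt x) ∧
    φt 0 = φ 0 ∧
    derivWithin φt (Ici 0) 0
      = derivWithin φ (Ici 0) 0 - ((g ^ 2 * ψ 0 ^ 2 : ℝ) : ℂ) * φ 0 := by
  have hUD : UniqueDiffOn ℝ (Ici (0:ℝ)) := uniqueDiffOn_Ici 0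
  have hWne : ∀ x ∈ Ici (0:ℝ), ((W x : ℝ) : ℂ) ≠ 0 := fun x hx =>
    Complex.ofReal_ne_zero.mpr (ne_of_gt (hWpos x hx))
  have hφtfun : φt = fun x => φ x - ((g ^ 2 * ψ x : ℝ) : ℂ) * P x / ((W x : ℝ) : ℂ) :=
    funext hφtP
  -- first derivative of φt
  have hD : ∀ x ∈ Ici (0:ℝ), HasDerivWithinAt φt
      (derivWithin φ (Ici 0) x -
        ((((g ^ 2 * derivWithin ψ (Ici 0) x : ℝ) : ℂ) * P x
            + ((g ^ 2 * ψ x : ℝ) : ℂ) * (φ x * ((ψ x : ℝ) : ℂ))) * ((W x : ℝ) : ℂ)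
          - ((g ^ 2 * ψ x : ℝ) : ℂ) * P x * ((g ^ 2 * ψ x ^ 2 : ℝ) : ℂ))
          / ((W x : ℝ) : ℂ) ^ 2) (Ici 0) x := by
    intro x hx
    rw [hφtfun]
    exact (hφ x hx).hasDerivWithinAt.sub
      (((ofReal_hasDerivWithinAt (HasDerivWithinAt.const_mul (g ^ 2)
          (hψ x hx).hasDerivWithinAt)).mul (hPder x hx)).div
        (ofReal_hasDerivWithinAt (hWder x hx)) (hWne x hx))
  have hDEq : EqOn (fun y => derivWithin φt (Ici 0) y)
      (fun y => derivWithin φ (Ici 0) y -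
        ((((g ^ 2 * derivWithin ψ (Ici 0) y : ℝ) : ℂ) * P y
            + ((g ^ 2 * ψ y : ℝ) : ℂ) * (φ y * ((ψ y : ℝ) : ℂ))) * ((W y : ℝ) : ℂ)
          - ((g ^ 2 * ψ y : ℝ) : ℂ) * P y * ((g ^ 2 * ψ y ^ 2 : ℝ) : ℂ))
          / ((W y : ℝ) : ℂ) ^ 2) (Ici 0) :=
    fun y hy => (hD y hy).derivWithin (hUD y hy)
  refine ⟨fun x hx => (hD x hx).differentiableWithinAt, ?_, ?_, ?_, ?_⟩
  · intro x hx
    have h2 := ofReal_hasDerivWithinAt (HasDerivWithinAt.const_mul (g ^ 2)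
      (hψ' x hx).hasDerivWithinAt)
    have h4 := ofReal_hasDerivWithinAt (HasDerivWithinAt.const_mul (g ^ 2)
      (hψ x hx).hasDerivWithinAt)
    have h5 := (hφ x hx).hasDerivWithinAt.mul
      (ofReal_hasDerivWithinAt (hψ x hx).hasDerivWithinAt)
    have h6 := ofReal_hasDerivWithinAt (hWder x hx)
    have h7 := ofReal_hasDerivWithinAt (HasDerivWithinAt.const_mul (g ^ 2)
      ((hψ x hx).hasDerivWithinAt.pow 2))
    have hnum := (((h2.mul (hPder x hx)).add (h4.mul h5)).mul h6).sub
      ((h4.mul (hPder x hx)).mul h7)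
    have hden := h6.mul h6
    rw [show ((fun y => ((W y : ℝ) : ℂ)) * fun y => ((W y : ℝ) : ℂ)) = fun y => ((W y : ℝ) : ℂ) ^ 2
      from funext fun y => (sq _).symm] at hden
    have H := ((hφ' x hx).hasDerivWithinAt).sub
      (hnum.div hden (pow_ne_zero 2 (hWne x hx)))
    exact H.differentiableWithinAt.congr (fun y hy => hDEq hy) (hDEq hx)
  · intro x hx
    have h2 := ofReal_hasDerivWithinAt (HasDerivWithinAt.const_mul (g ^ 2)
      (hψ' x hx).hasDerivWithinAt)
    have h4 := ofReal_hasDerivWithinAt (HasDerivWithinAt.const_mul (g ^ 2)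
      (hψ x hx).hasDerivWithinAt)
    have h5 := (hφ x hx).hasDerivWithinAt.mul
      (ofReal_hasDerivWithinAt (hψ x hx).hasDerivWithinAt)
    have h6 := ofReal_hasDerivWithinAt (hWder x hx)
    have h7 := ofReal_hasDerivWithinAt (HasDerivWithinAt.const_mul (g ^ 2)
      ((hψ x hx).hasDerivWithinAt.pow 2))
    have hnum := (((h2.mul (hPder x hx)).add (h4.mul h5)).mul h6).sub
      ((h4.mul (hPder x hx)).mul h7)
    have hden := h6.mul h6
    rw [show ((fun y => ((W y : ℝ) : ℂ)) * fun y => ((W y : ℝ) : ℂ)) = fun y => ((W y : ℝ) : ℂ) ^ 2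
      from funext fun y => (sq _).symm] at hden
    have H := ((hφ' x hx).hasDerivWithinAt).sub
      (hnum.div hden (pow_ne_zero 2 (hWne x hx)))
    have hVtd : derivWithin (fun y => 2 * g ^ 2 * ψ y ^ 2 / W y) (Ici 0) x
        = (2 * g ^ 2 * (2 * ψ x * derivWithin ψ (Ici 0) x) * W x
            - 2 * g ^ 2 * ψ x ^ 2 * (g ^ 2 * ψ x ^ 2)) / W x ^ 2 := by
      have h := (HasDerivWithinAt.div (HasDerivWithinAt.const_mul (2 * g ^ 2)
          ((hψ x hx).hasDerivWithinAt.pow 2)) (hWder x hx)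
          (ne_of_gt (hWpos x hx))).derivWithin (hUD x hx)
      refine h.trans ?_; norm_num
    refine (derivWithin_congr hDEq (hDEq hx)).trans ((H.derivWithin (hUD x hx)).trans ?_)
    rw [hVt x, hφtP x, hVtd, hφ'' x hx, hψ'' x hx]
    have hrelx := hrel x hx
    have hWnex := hWne x hx
    simp only [Pi.mul_apply, Pi.add_apply, Pi.sub_apply, Pi.pow_apply] at *
    push_cast
    field_simp
    linear_combination (-((g:ℂ) ^ 2 * (ψ x : ℂ) * ((W x : ℝ):ℂ) ^ 2)) * hrelx
  · rw [hφtP 0, hP0]; simp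
  · rw [(hD 0 self_mem_Ici).derivWithin (hUD 0 self_mem_Ici), hP0, hW0]
    push_cast
    ring

/-- Darboux transformation adding a bound state: the transformed solution
satisfies the Schrödinger equation with the transformed potential, and the
boundary values transform by the stated rule. -/
theorem darboux_add_bound_state
    (V : ℝ → ℝ) (γ g : ℝ) (k : ℂ) (ψ : ℝ → ℝ) (φ : ℝ → ℂ)
    (W Vt : ℝ → ℝ) (φt : ℝ → ℂ)
    (hV : ContinuousOn V (Ici 0)) (hγ : 0 < γ)
    (hψ : ∀ x ∈ Ici (0 : ℝ), DifferentiableWithinAt ℝ ψ (Ici 0) x)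
    (hψ' : ∀ x ∈ Ici (0 : ℝ),
      DifferentiableWithinAt ℝ (fun y => derivWithin ψ (Ici 0) y) (Ici 0) x)
    (hψ'' : ∀ x ∈ Ici (0 : ℝ),
      derivWithin (fun y => derivWithin ψ (Ici 0) y) (Ici 0) x = (V x + γ ^ 2) * ψ x)
    (hφ : ∀ x ∈ Ici (0 : ℝ), DifferentiableWithinAt ℝ φ (Ici 0) x)
    (hφ' : ∀ x ∈ Ici (0 : ℝ),
      DifferentiableWithinAt ℝ (fun y => derivWithin φ (Ici 0) y) (Ici 0) x)
    (hφ'' : ∀ x ∈ Ici (0 : ℝ),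
      derivWithin (fun y => derivWithin φ (Ici 0) y) (Ici 0) x = ((V x : ℂ) - k ^ 2) * φ x)
    (hbc : φ 0 * ((derivWithin ψ (Ici 0) 0 : ℝ) : ℂ)
      = derivWithin φ (Ici 0) 0 * ((ψ 0 : ℝ) : ℂ))
    (hW : ∀ x, W x = 1 + g ^ 2 * ∫ y in (0 : ℝ)..x, ψ y ^ 2)
    (hVt : ∀ x, Vt x = V x - derivWithin (fun y => 2 * g ^ 2 * ψ y ^ 2 / W y) (Ici 0) x)
    (hφt : ∀ x, φt x = φ x -
      ((g ^ 2 * ψ x : ℝ) : ℂ) * (∫ y in (0 : ℝ)..x, φ y * ((ψ y : ℝ) : ℂ)) / ((W x : ℝ) : ℂ)) :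
    (∀ x ∈ Ici (0 : ℝ), DifferentiableWithinAt ℝ φt (Ici 0) x) ∧
    (∀ x ∈ Ici (0 : ℝ),
      DifferentiableWithinAt ℝ (fun y => derivWithin φt (Ici 0) y) (Ici 0) x) ∧
    (∀ x ∈ Ici (0 : ℝ),
      derivWithin (fun y => derivWithin φt (Ici 0) y) (Ici 0) x = ((Vt x : ℂ) - k ^ 2) * φt x) ∧
    φt 0 = φ 0 ∧
    derivWithin φt (Ici 0) 0
      = derivWithin φ (Ici 0) 0 - ((g ^ 2 * ψ 0 ^ 2 : ℝ) : ℂ) * φ 0 := by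
  have hψc : ContinuousOn ψ (Ici 0) := fun y hy => (hψ y hy).continuousWithinAt
  have hφc : ContinuousOn φ (Ici 0) := fun y hy => (hφ y hy).continuousWithinAt
  have hPc : ContinuousOn (fun y => φ y * ((ψ y : ℝ) : ℂ)) (Ici 0) :=
    hφc.mul (Complex.continuous_ofReal.comp_continuousOn hψc)
  have hPder : ∀ x ∈ Ici (0:ℝ), HasDerivWithinAt
      (fun t => ∫ y in (0:ℝ)..t, φ y * ((ψ y : ℝ) : ℂ)) (φ x * ((ψ x : ℝ) : ℂ)) (Ici 0) x :=
    fun x hx => ftc_Ici hPc hx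
  have hP0 : (∫ y in (0:ℝ)..(0:ℝ), φ y * ((ψ y : ℝ) : ℂ)) = 0 :=
    intervalIntegral.integral_same
  have hWfun : W = fun t => 1 + g ^ 2 * ∫ y in (0:ℝ)..t, ψ y ^ 2 := funext hW
  have hψsqc : ContinuousOn (fun y => ψ y ^ 2) (Ici 0) := hψc.pow 2
  have hWder : ∀ x ∈ Ici (0:ℝ), HasDerivWithinAt W (g ^ 2 * ψ x ^ 2) (Ici 0) x := by
    intro x hx; rw [hWfun]
    exact (HasDerivWithinAt.const_mul (g ^ 2) (ftc_Ici hψsqc hx)).const_add 1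
  have hWpos : ∀ x ∈ Ici (0:ℝ), 0 < W x := by
    intro x hx
    have h1 : 0 ≤ ∫ y in (0:ℝ)..x, ψ y ^ 2 :=
      intervalIntegral.integral_nonneg hx (fun y _ => sq_nonneg _)
    have h2 := mul_nonneg (sq_nonneg g) h1
    rw [hW x]; linarith
  have hW0 : W 0 = 1 := by rw [hW 0]; simp
  have hrel : ∀ x ∈ Ici (0:ℝ),
      derivWithin φ (Ici 0) x * ((ψ x : ℝ) : ℂ) - φ x * ((derivWithin ψ (Ici 0) x : ℝ) : ℂ)
        = -(k ^ 2 + ((γ : ℝ) : ℂ) ^ 2) * (∫ y in (0:ℝ)..x, φ y * ((ψ y : ℝ) : ℂ)) := by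
    intro x hx
    have hRconst : ∀ z ∈ Ici (0:ℝ), HasDerivWithinAt
        (fun t => derivWithin φ (Ici 0) t * ((ψ t : ℝ) : ℂ)
          - φ t * ((derivWithin ψ (Ici 0) t : ℝ) : ℂ)
          + (k ^ 2 + ((γ : ℝ) : ℂ) ^ 2) * ∫ y in (0:ℝ)..t, φ y * ((ψ y : ℝ) : ℂ))
        0 (Ici 0) z := by
      intro z hz
      have h := (((hφ' z hz).hasDerivWithinAt.mul
          (ofReal_hasDerivWithinAt (hψ z hz).hasDerivWithinAt)).sub
        ((hφ z hz).hasDerivWithinAt.mul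
          (ofReal_hasDerivWithinAt (hψ' z hz).hasDerivWithinAt))).add
        (HasDerivWithinAt.const_mul (k ^ 2 + ((γ : ℝ) : ℂ) ^ 2) (hPder z hz))
      refine h.congr_deriv ?_
      rw [hφ'' z hz, hψ'' z hz]
      push_cast
      ring
    have h0 := const_of_deriv_zero hRconst hx
    simp only [intervalIntegral.integral_same] at h0
    linear_combination h0 - hbc
  exact core_lemma V γ g k ψ φ W Vt φt
    (fun t => ∫ y in (0:ℝ)..t, φ y * ((ψ y : ℝ) : ℂ))
    hψ hψ' hψ'' hφ hφ' hφ'' hPder hP0 hWder hWpos hW0 hrel hVt hφt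
end

section
/- Let V : [0,∞) → ℝ be continuous, let γ > 0 and g be real numbers, and let k ∈ ℂ. Suppose ψ : [0,∞) → ℝ is twice differentiable with ψ''(x) = (V(x) + γ²)ψ(x) for all x ≥ 0, and φ : [0,∞) → ℂ is twice differentiable with φ''(x) = (V(x) − k²)φ(x) for all x ≥ 0, and suppose φ(0)ψ'(0) = φ'(0)ψ(0). Assume that W(x) := 1 − g²∫₀ˣ ψ(y)² dy satisfies W(x) > 0 for every x ≥ 0. Define the transformed potential Ṽ(x) = V(x) + d/dx[2g²ψ(x)²/W(x)] and the transformed solution φ̃(x) = φ(x) + g²ψ(x)(∫₀ˣ φ(y)ψ(y) dy)/W(x). Then φ̃ is twice differentiable on [0,∞) and satisfies φ̃''(x) = (Ṽ(x) − k²)φ̃(x) for all x ≥ 0; moreover φ̃(0) = φ(0) and φ̃'(0) = φ'(0) + g²ψ(0)²φ(0). -/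
open Set MeasureTheory intervalIntegral

lemma myOfReal {f : ℝ → ℝ} {u x : ℝ} {s : Set ℝ} (hf : HasDerivWithinAt f u s x) :
    HasDerivWithinAt (fun y => ((f y : ℝ) : ℂ)) (u : ℂ) s x := by
  exact Complex.ofRealCLM.hasFDerivAt.comp_hasDerivWithinAt x hf

/-- Darboux transformation removing a bound state: the transformed solution
satisfies the Schrödinger equation with the transformed potential, and the
boundary values transform by the stated rule. -/
theorem darboux_remove_bound_state
    (V : ℝ → ℝ) (γ g : ℝ) (k : ℂ) (ψ : ℝ → ℝ) (φ : ℝ → ℂ)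
    (W Vt : ℝ → ℝ) (φt : ℝ → ℂ)
    (hV : ContinuousOn V (Ici 0)) (hγ : 0 < γ)
    (hψ : ∀ x ∈ Ici (0 : ℝ), DifferentiableWithinAt ℝ ψ (Ici 0) x)
    (hψ' : ∀ x ∈ Ici (0 : ℝ),
      DifferentiableWithinAt ℝ (fun y => derivWithin ψ (Ici 0) y) (Ici 0) x)
    (hψ'' : ∀ x ∈ Ici (0 : ℝ),
      derivWithin (fun y => derivWithin ψ (Ici 0) y) (Ici 0) x = (V x + γ ^ 2) * ψ x)
    (hφ : ∀ x ∈ Ici (0 : ℝ), DifferentiableWithinAt ℝ φ (Ici 0) x)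
    (hφ' : ∀ x ∈ Ici (0 : ℝ),
      DifferentiableWithinAt ℝ (fun y => derivWithin φ (Ici 0) y) (Ici 0) x)
    (hφ'' : ∀ x ∈ Ici (0 : ℝ),
      derivWithin (fun y => derivWithin φ (Ici 0) y) (Ici 0) x = ((V x : ℂ) - k ^ 2) * φ x)
    (hbc : φ 0 * ((derivWithin ψ (Ici 0) 0 : ℝ) : ℂ)
      = derivWithin φ (Ici 0) 0 * ((ψ 0 : ℝ) : ℂ))
    (hW : ∀ x, W x = 1 - g ^ 2 * ∫ y in (0 : ℝ)..x, ψ y ^ 2)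
    (hWpos : ∀ x ∈ Ici (0 : ℝ), 0 < W x)
    (hVt : ∀ x, Vt x = V x + derivWithin (fun y => 2 * g ^ 2 * ψ y ^ 2 / W y) (Ici 0) x)
    (hφt : ∀ x, φt x = φ x +
      ((g ^ 2 * ψ x : ℝ) : ℂ) * (∫ y in (0 : ℝ)..x, φ y * ((ψ y : ℝ) : ℂ)) / ((W x : ℝ) : ℂ)) :
    (∀ x ∈ Ici (0 : ℝ), DifferentiableWithinAt ℝ φt (Ici 0) x) ∧
    (∀ x ∈ Ici (0 : ℝ),
      DifferentiableWithinAt ℝ (fun y => derivWithin φt (Ici 0) y) (Ici 0) x) ∧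
    (∀ x ∈ Ici (0 : ℝ),
      derivWithin (fun y => derivWithin φt (Ici 0) y) (Ici 0) x = ((Vt x : ℂ) - k ^ 2) * φt x) ∧
    φt 0 = φ 0 ∧
    derivWithin φt (Ici 0) 0
      = derivWithin φ (Ici 0) 0 + ((g ^ 2 * ψ 0 ^ 2 : ℝ) : ℂ) * φ 0 := by
  have hUD : UniqueDiffOn ℝ (Ici (0:ℝ)) := uniqueDiffOn_Ici 0
  set ψ' : ℝ → ℝ := fun x => derivWithin ψ (Ici 0) x with hψ'def
  set φ' : ℝ → ℂ := fun x => derivWithin φ (Ici 0) x with hφ'def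
  -- continuity
  have hcψ : ContinuousOn ψ (Ici 0) := fun x hx => (hψ x hx).continuousWithinAt
  have hcφ : ContinuousOn φ (Ici 0) := fun x hx => (hφ x hx).continuousWithinAt
  set Ψ : ℝ → ℝ := fun x => ψ (max x 0) with hΨdef
  set Φ : ℝ → ℂ := fun x => φ (max x 0) with hΦdef
  have hmem : ∀ x : ℝ, max x 0 ∈ Ici (0:ℝ) := fun x => le_max_right x 0
  have hcΨ : Continuous Ψ := hcψ.comp_continuous (continuous_id.max continuous_const) hmem
  have hcΦ : Continuous Φ := hcφ.comp_continuous (continuous_id.max continuous_const) hmem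
  have hΨeq : ∀ x ∈ Ici (0:ℝ), Ψ x = ψ x := fun x hx => by
    simp only [hΨdef]; rw [max_eq_left hx]
  have hΦeq : ∀ x ∈ Ici (0:ℝ), Φ x = φ x := fun x hx => by
    simp only [hΦdef]; rw [max_eq_left hx]
  -- the integral functions
  set P : ℝ → ℂ := fun x => ∫ y in (0:ℝ)..x, Φ y * ((Ψ y : ℝ) : ℂ) with hPdef
  have hcPInt : Continuous fun y => Φ y * ((Ψ y : ℝ) : ℂ) :=
    hcΦ.mul (Complex.continuous_ofReal.comp hcΨ)
  have hPderAt : ∀ b : ℝ, HasDerivAt P (Φ b * ((Ψ b : ℝ) : ℂ)) b := fun b =>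
    intervalIntegral.integral_hasDerivAt_right (hcPInt.intervalIntegrable _ _)
      (hcPInt.stronglyMeasurableAtFilter _ _) hcPInt.continuousAt
  have hPd : ∀ x ∈ Ici (0:ℝ), HasDerivWithinAt P (φ x * ((ψ x : ℝ) : ℂ)) (Ici 0) x := by
    intro x hx
    have := (hPderAt x).hasDerivWithinAt (s := Ici 0)
    rwa [hΨeq x hx, hΦeq x hx] at this
  have hP0 : P 0 = 0 := intervalIntegral.integral_same
  have hPeq : ∀ x ∈ Ici (0:ℝ), (∫ y in (0:ℝ)..x, φ y * ((ψ y : ℝ) : ℂ)) = P x := by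
    intro x hx
    refine intervalIntegral.integral_congr (fun y hy => ?_)
    rw [Set.uIcc_of_le hx] at hy
    rw [hΨeq y hy.1, hΦeq y hy.1]
  -- W
  have hW0 : W 0 = 1 := by rw [hW 0, intervalIntegral.integral_same]; ring
  have hIderAt : ∀ b : ℝ, HasDerivAt (fun x => ∫ y in (0:ℝ)..x, Ψ y ^ 2) (Ψ b ^ 2) b := by
    intro b
    have h : Continuous fun y => Ψ y ^ 2 := hcΨ.pow 2
    exact intervalIntegral.integral_hasDerivAt_right (h.intervalIntegrable _ _)
      (h.stronglyMeasurableAtFilter _ _) h.continuousAt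
  have hWeqOn : ∀ x ∈ Ici (0:ℝ), W x = 1 - g ^ 2 * ∫ y in (0:ℝ)..x, Ψ y ^ 2 := by
    intro x hx
    rw [hW x]
    congr 1
    congr 1
    refine intervalIntegral.integral_congr (fun y hy => ?_)
    rw [Set.uIcc_of_le hx] at hy
    rw [hΨeq y hy.1]
  have hWd : ∀ x ∈ Ici (0:ℝ), HasDerivWithinAt W (-(g ^ 2 * ψ x ^ 2)) (Ici 0) x := by
    intro x hx
    have h1 : HasDerivAt (fun x => 1 - g ^ 2 * ∫ y in (0:ℝ)..x, Ψ y ^ 2)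
        (-(g ^ 2 * Ψ x ^ 2)) x := ((hIderAt x).const_mul (g ^ 2)).const_sub 1
    have h2 := (h1.hasDerivWithinAt (s := Ici 0)).congr
      (fun y hy => hWeqOn y hy) (hWeqOn x hx)
    rwa [hΨeq x hx] at h2
  have hWne : ∀ x ∈ Ici (0:ℝ), ((W x : ℝ) : ℂ) ≠ 0 := fun x hx =>
    Complex.ofReal_ne_zero.2 (hWpos x hx).ne'
  -- derivative facts
  have hψd : ∀ x ∈ Ici (0:ℝ), HasDerivWithinAt ψ (ψ' x) (Ici 0) x := fun x hx =>
    (hψ x hx).hasDerivWithinAt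
  have hφd : ∀ x ∈ Ici (0:ℝ), HasDerivWithinAt φ (φ' x) (Ici 0) x := fun x hx =>
    (hφ x hx).hasDerivWithinAt
  have hψ'd : ∀ x ∈ Ici (0:ℝ),
      HasDerivWithinAt ψ' ((V x + γ ^ 2) * ψ x) (Ici 0) x := by
    intro x hx
    have := (hψ' x hx).hasDerivWithinAt
    rwa [hψ'' x hx] at this
  have hφ'd : ∀ x ∈ Ici (0:ℝ),
      HasDerivWithinAt φ' (((V x : ℂ) - k ^ 2) * φ x) (Ici 0) x := by
    intro x hx
    have := (hφ' x hx).hasDerivWithinAt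
    rwa [hφ'' x hx] at this
  -- complex coercions
  have cψ : ∀ x ∈ Ici (0:ℝ),
      HasDerivWithinAt (fun y => ((ψ y : ℝ) : ℂ)) ((ψ' x : ℝ) : ℂ) (Ici 0) x :=
    fun x hx => myOfReal (hψd x hx)
  have cψ' : ∀ x ∈ Ici (0:ℝ),
      HasDerivWithinAt (fun y => ((ψ' y : ℝ) : ℂ)) (((V x + γ ^ 2) * ψ x : ℝ) : ℂ) (Ici 0) x :=
    fun x hx => myOfReal (hψ'd x hx)
  have cW : ∀ x ∈ Ici (0:ℝ),
      HasDerivWithinAt (fun y => ((W y : ℝ) : ℂ)) ((-(g ^ 2 * ψ x ^ 2) : ℝ) : ℂ) (Ici 0) x :=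
    fun x hx => myOfReal (hWd x hx)
  -- first derivative of φt
  have hF1 : ∀ x ∈ Ici (0:ℝ), HasDerivWithinAt φt
      (φ' x + (((g ^ 2 * ψ' x : ℝ) : ℂ) * P x
          + ((g ^ 2 * ψ x ^ 2 : ℝ) : ℂ) * φ x) / ((W x : ℝ) : ℂ)
        + ((g ^ 4 * ψ x ^ 3 : ℝ) : ℂ) * P x / ((W x ^ 2 : ℝ) : ℂ)) (Ici 0) x := by
    intro x hx
    have hWne' := hWne x hx
    have h1 : HasDerivWithinAt (fun y => ((g ^ 2 * ψ y : ℝ) : ℂ)) ((g ^ 2 * ψ' x : ℝ) : ℂ)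
        (Ici 0) x := myOfReal ((hψd x hx).const_mul (g ^ 2))
    have h2 := h1.mul (hPd x hx)
    have h3 := h2.div (cW x hx) hWne'
    have h4 := (hφd x hx).add h3
    have h5 : HasDerivWithinAt φt
        ((φ' x) + ((((g ^ 2 * ψ' x : ℝ) : ℂ) * P x +
          ((g ^ 2 * ψ x : ℝ) : ℂ) * (φ x * ((ψ x : ℝ) : ℂ))) * ((W x : ℝ) : ℂ) -
          ((g ^ 2 * ψ x : ℝ) : ℂ) * P x * ((-(g ^ 2 * ψ x ^ 2) : ℝ) : ℂ)) / ((W x : ℝ) : ℂ) ^ 2)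
        (Ici 0) x := by
      refine h4.congr (fun y hy => ?_) ?_
      · rw [hφt y, hPeq y hy]; rfl
      · rw [hφt x, hPeq x hx]; rfl
    have e : (φ' x) + ((((g ^ 2 * ψ' x : ℝ) : ℂ) * P x +
          ((g ^ 2 * ψ x : ℝ) : ℂ) * (φ x * ((ψ x : ℝ) : ℂ))) * ((W x : ℝ) : ℂ) -
          ((g ^ 2 * ψ x : ℝ) : ℂ) * P x * ((-(g ^ 2 * ψ x ^ 2) : ℝ) : ℂ)) / ((W x : ℝ) : ℂ) ^ 2
        = φ' x + (((g ^ 2 * ψ' x : ℝ) : ℂ) * P x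
          + ((g ^ 2 * ψ x ^ 2 : ℝ) : ℂ) * φ x) / ((W x : ℝ) : ℂ)
        + ((g ^ 4 * ψ x ^ 3 : ℝ) : ℂ) * P x / ((W x ^ 2 : ℝ) : ℂ) := by
      push_cast
      field_simp
      ring
    rwa [e] at h5
  have hdφt : ∀ x ∈ Ici (0:ℝ), derivWithin φt (Ici 0) x
      = φ' x + (((g ^ 2 * ψ' x : ℝ) : ℂ) * P x
          + ((g ^ 2 * ψ x ^ 2 : ℝ) : ℂ) * φ x) / ((W x : ℝ) : ℂ)
        + ((g ^ 4 * ψ x ^ 3 : ℝ) : ℂ) * P x / ((W x ^ 2 : ℝ) : ℂ) := fun x hx =>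
    (hF1 x hx).derivWithin (hUD x hx)
  -- Wronskian identity
  have hwd : ∀ x ∈ Ici (0:ℝ), HasDerivWithinAt
      (fun y => ((ψ' y : ℝ) : ℂ) * φ y - ((ψ y : ℝ) : ℂ) * φ' y)
      ((((γ:ℂ) ^ 2) + k ^ 2) * (φ x * ((ψ x : ℝ) : ℂ))) (Ici 0) x := by
    intro x hx
    have h1 := ((cψ' x hx).mul (hφd x hx)).sub ((cψ x hx).mul (hφ'd x hx))
    have e : (((V x + γ ^ 2) * ψ x : ℝ) : ℂ) * φ x + ((ψ' x : ℝ) : ℂ) * φ' x -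
        (((ψ' x : ℝ) : ℂ) * φ' x + ((ψ x : ℝ) : ℂ) * (((V x : ℂ) - k ^ 2) * φ x))
        = (((γ:ℂ) ^ 2) + k ^ 2) * (φ x * ((ψ x : ℝ) : ℂ)) := by
      push_cast; ring
    rwa [e] at h1
  have hQd : ∀ x ∈ Ici (0:ℝ),
      HasDerivWithinAt (fun y => (((γ:ℂ) ^ 2) + k ^ 2) * P y)
      ((((γ:ℂ) ^ 2) + k ^ 2) * (φ x * ((ψ x : ℝ) : ℂ))) (Ici 0) x := by
    intro x hx
    exact (hPd x hx).const_mul _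
  have hwP : ∀ b ∈ Ici (0:ℝ), ((ψ' b : ℝ) : ℂ) * φ b - ((ψ b : ℝ) : ℂ) * φ' b
      = (((γ:ℂ) ^ 2) + k ^ 2) * P b := by
    intro b hb
    have hcw : ContinuousOn (fun y => ((ψ' y : ℝ) : ℂ) * φ y - ((ψ y : ℝ) : ℂ) * φ' y)
        (Ici (0:ℝ)) := fun x hx => (hwd x hx).continuousWithinAt
    have hcQ : ContinuousOn (fun y => (((γ:ℂ) ^ 2) + k ^ 2) * P y) (Ici (0:ℝ)) :=
      fun x hx => (hQd x hx).continuousWithinAt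
    have key := eq_of_has_deriv_right_eq
      (f := fun y => ((ψ' y : ℝ) : ℂ) * φ y - ((ψ y : ℝ) : ℂ) * φ' y)
      (g := fun y => (((γ:ℂ) ^ 2) + k ^ 2) * P y)
      (f' := fun x => (((γ:ℂ) ^ 2) + k ^ 2) * (φ x * ((ψ x : ℝ) : ℂ))) (a := 0) (b := b)
      (fun x hx => (hwd x (mem_Ici.2 hx.1)).mono (Ici_subset_Ici.2 hx.1))
      (fun x hx => (hQd x (mem_Ici.2 hx.1)).mono (Ici_subset_Ici.2 hx.1))
      (hcw.mono Icc_subset_Ici_self)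
      (hcQ.mono Icc_subset_Ici_self)
      (by show ((ψ' 0 : ℝ) : ℂ) * φ 0 - ((ψ 0 : ℝ) : ℂ) * φ' 0
            = (((γ:ℂ) ^ 2) + k ^ 2) * P 0
          rw [hP0, mul_zero]; linear_combination hbc)
    exact key b (mem_Icc.2 ⟨hb, le_refl b⟩)
  -- assemble
  refine ⟨fun x hx => (hF1 x hx).differentiableWithinAt, ?_, ?_, ?_, ?_⟩
  · intro x hx
    have hWne' := hWne x hx
    have hWneR' : W x ≠ 0 := (hWpos x hx).ne'
    have cA : HasDerivWithinAt (fun y => ((g ^ 2 * ψ' y : ℝ) : ℂ))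
        ((g ^ 2 * ((V x + γ ^ 2) * ψ x) : ℝ) : ℂ) (Ici 0) x :=
      myOfReal ((hψ'd x hx).const_mul (g ^ 2))
    have cB : HasDerivWithinAt (fun y => ((g ^ 2 * ψ y ^ 2 : ℝ) : ℂ))
        ((g ^ 2 * ((2:ℕ) * ψ x ^ (2-1) * ψ' x) : ℝ) : ℂ) (Ici 0) x :=
      myOfReal (((hψd x hx).pow 2).const_mul (g ^ 2))
    have cC : HasDerivWithinAt (fun y => ((g ^ 4 * ψ y ^ 3 : ℝ) : ℂ))
        ((g ^ 4 * ((3:ℕ) * ψ x ^ (3-1) * ψ' x) : ℝ) : ℂ) (Ici 0) x :=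
      myOfReal (((hψd x hx).pow 3).const_mul (g ^ 4))
    have cD : HasDerivWithinAt (fun y => ((W y ^ 2 : ℝ) : ℂ))
        (((2:ℕ) * W x ^ (2-1) * (-(g ^ 2 * ψ x ^ 2)) : ℝ) : ℂ) (Ici 0) x :=
      myOfReal ((hWd x hx).pow 2)
    have hT2 := ((cA.mul (hPd x hx)).add (cB.mul (hφd x hx))).div (cW x hx) hWne'
    have hT3 := (cC.mul (hPd x hx)).div cD
        (Complex.ofReal_ne_zero.2 (pow_ne_zero 2 hWneR'))
    have hF := ((hφ'd x hx).add hT2).add hT3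
    exact hF.differentiableWithinAt.congr (fun y hy => hdφt y hy) (hdφt x hx)
  · intro x hx
    have hWne' := hWne x hx
    have hWneR : W x ≠ 0 := (hWpos x hx).ne'
    have hWneR' : W x ≠ 0 := (hWpos x hx).ne'
    have cA : HasDerivWithinAt (fun y => ((g ^ 2 * ψ' y : ℝ) : ℂ))
        ((g ^ 2 * ((V x + γ ^ 2) * ψ x) : ℝ) : ℂ) (Ici 0) x :=
      myOfReal ((hψ'd x hx).const_mul (g ^ 2))
    have cB : HasDerivWithinAt (fun y => ((g ^ 2 * ψ y ^ 2 : ℝ) : ℂ))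
        ((g ^ 2 * ((2:ℕ) * ψ x ^ (2-1) * ψ' x) : ℝ) : ℂ) (Ici 0) x :=
      myOfReal (((hψd x hx).pow 2).const_mul (g ^ 2))
    have cC : HasDerivWithinAt (fun y => ((g ^ 4 * ψ y ^ 3 : ℝ) : ℂ))
        ((g ^ 4 * ((3:ℕ) * ψ x ^ (3-1) * ψ' x) : ℝ) : ℂ) (Ici 0) x :=
      myOfReal (((hψd x hx).pow 3).const_mul (g ^ 4))
    have cD : HasDerivWithinAt (fun y => ((W y ^ 2 : ℝ) : ℂ))
        (((2:ℕ) * W x ^ (2-1) * (-(g ^ 2 * ψ x ^ 2)) : ℝ) : ℂ) (Ici 0) x :=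
      myOfReal ((hWd x hx).pow 2)
    have hT2 := ((cA.mul (hPd x hx)).add (cB.mul (hφd x hx))).div (cW x hx) hWne'
    have hT3 := (cC.mul (hPd x hx)).div cD
        (Complex.ofReal_ne_zero.2 (pow_ne_zero 2 hWneR'))
    have hF := ((hφ'd x hx).add hT2).add hT3
    have e1 : derivWithin (fun y => derivWithin φt (Ici 0) y) (Ici 0) x
        = derivWithin (fun y => φ' y + (((g ^ 2 * ψ' y : ℝ) : ℂ) * P y
          + ((g ^ 2 * ψ y ^ 2 : ℝ) : ℂ) * φ y) / ((W y : ℝ) : ℂ)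
        + ((g ^ 4 * ψ y ^ 3 : ℝ) : ℂ) * P y / ((W y ^ 2 : ℝ) : ℂ)) (Ici 0) x :=
      derivWithin_congr (fun y hy => hdφt y hy) (hdφt x hx)
    have h2 := hF.derivWithin (hUD x hx)
    refine (e1.trans h2).trans ?_
    rw [hVt x]
    have hQ := ((((hψd x hx).pow 2).const_mul (2 * g ^ 2)).div (hWd x hx) hWneR).derivWithin
      (hUD x hx)
    rw [show derivWithin (fun y => 2 * g ^ 2 * ψ y ^ 2 / W y) (Ici 0) x = _ from hQ]
    rw [hφt x, hPeq x hx]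
    have hwr := hwP x hx
    norm_num
    push_cast
    field_simp
    linear_combination (-(g:ℂ) ^ 2 * ((ψ x : ℝ) : ℂ) * ((W x : ℝ) : ℂ) ^ 2) * hwr
  · rw [hφt 0, intervalIntegral.integral_same]; simp
  · have h0 : (0:ℝ) ∈ Ici (0:ℝ) := Set.self_mem_Ici
    rw [hdφt 0 h0, hP0, hW0]
    push_cast
    ring
end

section
/- Let γ > 0, b ≥ 0, and let c be a nonzero real number. Suppose ψ : [0,∞) → ℝ is continuous and satisfies ψ(x) = c·e^{−γx} for all x ≥ b. Then ψ² is integrable on (0,∞); set g² := 1/∫₀^∞ ψ(y)² dy. Then for every x ≥ b one has 1 − g²∫₀ˣ ψ(y)² dy = g²c²e^{−2γx}/(2γ) > 0 and 2g²ψ(x)²/(1 − g²∫₀ˣ ψ(y)² dy) = 4γ. In particular, the function x ↦ 2g²ψ(x)²/(1 − g²∫₀ˣ ψ(y)² dy) is constant on [b,∞). -/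
open Set MeasureTheory intervalIntegral

lemma exp_tail_integral {k : ℝ} (hk : 0 < k) (x : ℝ) :
    ∫ y in Ioi x, Real.exp (-k * y) = Real.exp (-k * x) / k := by
  have hderiv : ∀ y ∈ Ici x, HasDerivAt (fun y => -Real.exp (-k * y) / k)
      (Real.exp (-k * y)) y := by
    intro y _
    have h0 : HasDerivAt (fun y : ℝ => -k * y) (-k * 1) y := (hasDerivAt_id y).const_mul (-k)
    rw [mul_one] at h0
    have h := h0.exp
    have := (h.neg).div_const k
    refine this.congr_deriv ?_
    field_simp
  have hint : IntegrableOn (fun y => Real.exp (-k * y)) (Ioi x) := by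
    simpa using exp_neg_integrableOn_Ioi x hk
  have htend : Filter.Tendsto (fun y => -Real.exp (-k * y) / k) Filter.atTop (nhds 0) := by
    have h1 : Filter.Tendsto (fun y : ℝ => k * y) Filter.atTop Filter.atTop :=
      Filter.Tendsto.const_mul_atTop hk Filter.tendsto_id
    have h2 := Real.tendsto_exp_atBot.comp (Filter.tendsto_neg_atTop_atBot.comp h1)
    have h3 : Filter.Tendsto (fun y : ℝ => Real.exp (-k * y)) Filter.atTop (nhds 0) := by
      have he : (fun y : ℝ => Real.exp (-k * y)) = Real.exp ∘ Neg.neg ∘ fun y => k * y := by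
        funext y; simp [neg_mul]
      rw [he]; exact h2
    simpa using (h3.neg).div_const k
  have := MeasureTheory.integral_Ioi_of_hasDerivAt_of_tendsto' hderiv hint htend
  rw [this]
  field_simp
  ring

/-- Computational core of Theorem 3.3: for a bound-state solution equal to
`c·e^{−γx}` on `[b,∞)`, with norming constant `g² = 1/∫₀^∞ ψ²`, the quantity
`2g²ψ(x)²/(1 − g²∫₀ˣψ²)` is constant equal to `4γ` on `[b,∞)`. -/
theorem darboux_remove_preserves_support
    (γ b c : ℝ) (hγ : 0 < γ) (hb : 0 ≤ b) (hc : c ≠ 0) (ψ : ℝ → ℝ)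
    (hψc : ContinuousOn ψ (Ici 0))
    (hψ : ∀ x, b ≤ x → ψ x = c * Real.exp (-γ * x)) :
    IntegrableOn (fun y => ψ y ^ 2) (Ioi 0) ∧
    ∀ g2 : ℝ, g2 = 1 / ∫ y in Ioi (0 : ℝ), ψ y ^ 2 →
      ∀ x, b ≤ x →
        (1 - g2 * ∫ y in (0 : ℝ)..x, ψ y ^ 2)
            = g2 * c ^ 2 * Real.exp (-2 * γ * x) / (2 * γ) ∧
        0 < g2 * c ^ 2 * Real.exp (-2 * γ * x) / (2 * γ) ∧
        2 * g2 * ψ x ^ 2 / (1 - g2 * ∫ y in (0 : ℝ)..x, ψ y ^ 2) = 4 * γ := by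
  have hk : (0:ℝ) < 2 * γ := by linarith
  -- ψ² on [b, ∞): equals c² exp(-2γ y)
  have hsq : ∀ y, b ≤ y → ψ y ^ 2 = c ^ 2 * Real.exp (-(2 * γ) * y) := by
    intro y hy
    rw [hψ y hy, mul_pow, ← Real.exp_nat_mul]
    ring_nf
  -- integrability on any Ioi x with x ≥ b... first general tail lemma
  have htailInt : ∀ x, b ≤ x → IntegrableOn (fun y => ψ y ^ 2) (Ioi x) := by
    intro x hx
    have : IntegrableOn (fun y => c ^ 2 * Real.exp (-(2 * γ) * y)) (Ioi x) :=
      (exp_neg_integrableOn_Ioi x hk).const_mul _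
    exact this.congr_fun (fun y hy => (hsq y (le_trans hx (le_of_lt hy))).symm)
      measurableSet_Ioi
  have htail : ∀ x, b ≤ x →
      ∫ y in Ioi x, ψ y ^ 2 = c ^ 2 * Real.exp (-2 * γ * x) / (2 * γ) := by
    intro x hx
    have h1 : ∫ y in Ioi x, ψ y ^ 2 = ∫ y in Ioi x, c ^ 2 * Real.exp (-(2 * γ) * y) := by
      apply setIntegral_congr_fun measurableSet_Ioi
      intro y hy
      exact hsq y (le_trans hx (le_of_lt hy))
    rw [h1, MeasureTheory.integral_const_mul, exp_tail_integral hk x]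
    ring_nf
  -- integrability on segments
  have hseg : ∀ x, 0 ≤ x → IntegrableOn (fun y => ψ y ^ 2) (Ioc 0 x) := by
    intro x hx
    have : ContinuousOn (fun y => ψ y ^ 2) (Icc 0 x) :=
      (hψc.mono (Icc_subset_Ici_self)).pow 2
    exact (this.integrableOn_Icc).mono_set Ioc_subset_Icc_self
  have hIoi : IntegrableOn (fun y => ψ y ^ 2) (Ioi 0) := by
    rw [← Ioc_union_Ioi_eq_Ioi hb]
    exact (hseg b hb).union (htailInt b le_rfl)
  refine ⟨hIoi, ?_⟩
  intro g2 hg2 x hx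
  have hx0 : (0:ℝ) ≤ x := le_trans hb hx
  -- split the integral
  have hsplit : ∫ y in Ioi (0:ℝ), ψ y ^ 2
      = (∫ y in (0:ℝ)..x, ψ y ^ 2) + ∫ y in Ioi x, ψ y ^ 2 := by
    rw [intervalIntegral.integral_of_le hx0, ← setIntegral_union
      (Ioc_disjoint_Ioi le_rfl) measurableSet_Ioi (hseg x hx0) (htailInt x hx),
      Ioc_union_Ioi_eq_Ioi hx0]
  have hIocnn : 0 ≤ ∫ y in (0:ℝ)..x, ψ y ^ 2 :=
    intervalIntegral.integral_nonneg hx0 (fun y _ => sq_nonneg _)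
  have htailpos : 0 < ∫ y in Ioi x, ψ y ^ 2 := by
    rw [htail x hx]
    positivity
  have hIpos : 0 < ∫ y in Ioi (0:ℝ), ψ y ^ 2 := by
    rw [hsplit]; linarith
  have hIne : (∫ y in Ioi (0:ℝ), ψ y ^ 2) ≠ 0 := ne_of_gt hIpos
  have hg2pos : 0 < g2 := by rw [hg2]; positivity
  have key : 1 - g2 * ∫ y in (0:ℝ)..x, ψ y ^ 2
      = g2 * c ^ 2 * Real.exp (-2 * γ * x) / (2 * γ) := by
    have hT := htail x hx
    rw [hg2]
    have h5 : (1:ℝ) - (1 / ∫ y in Ioi (0:ℝ), ψ y ^ 2) * ∫ y in (0:ℝ)..x, ψ y ^ 2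
        = (1 / ∫ y in Ioi (0:ℝ), ψ y ^ 2) * ∫ y in Ioi x, ψ y ^ 2 := by
      field_simp
      linarith [hsplit]
    rw [h5, hT]
    ring
  refine ⟨key, ?_, ?_⟩
  · positivity
  · rw [key, hψ x hx]
    have hexp : (c * Real.exp (-γ * x)) ^ 2 = c ^ 2 * Real.exp (-2 * γ * x) := by
      rw [mul_pow, ← Real.exp_nat_mul]; ring_nf
    rw [hexp]
    have hE : Real.exp (-2 * γ * x) ≠ 0 := Real.exp_ne_zero _
    field_simp
    ring
end

section
/- Let u, w : [0,∞) → ℝ be continuous and let g be a real number. Define A(x) = ∫₀ˣ u(y)w(y) dy, B(x) = ∫₀ˣ w(y)² dy, and v(x) = u(x) − g²w(x)A(x)/(1 + g²B(x)). Then the function D(x) := g²A(x)²/(1 + g²B(x)) is differentiable on [0,∞) and for every x ≥ 0 one has v(x)² = u(x)² − D'(x). -/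
open Set MeasureTheory intervalIntegral Topology Filter

lemma ftc_ici {f : ℝ → ℝ} (hf : ContinuousOn f (Ici 0)) {x : ℝ} (hx : 0 ≤ x) :
    HasDerivWithinAt (fun x => ∫ y in (0:ℝ)..x, f y) (f x) (Ici 0) x := by
  have hmeas : AEStronglyMeasurable f (volume.restrict (Ici 0)) :=
    hf.aestronglyMeasurable measurableSet_Ici
  have hint : IntervalIntegrable f volume 0 x :=
    (hf.mono (by rw [uIcc_of_le hx]; exact Icc_subset_Ici_self)).intervalIntegrable
  rcases eq_or_lt_of_le hx with rfl | hx'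
  · exact integral_hasDerivWithinAt_right hint
      ⟨Ici 0, mem_of_superset self_mem_nhdsWithin Ioi_subset_Ici_self, hmeas⟩
      ((hf.continuousWithinAt self_mem_Ici).mono Ioi_subset_Ici_self)
  · have hmem : Ici (0:ℝ) ∈ 𝓝 x := Ici_mem_nhds hx'
    have hc : ContinuousAt f x := (hf.continuousWithinAt hx).continuousAt hmem
    exact (integral_hasDerivAt_right hint ⟨Ici 0, hmem, hmeas⟩ hc).hasDerivWithinAt

/-- Identity (3.15): the square of the Darboux-transformed solution differs
from the square of the original solution by an exact derivative. -/
theorem darboux_square_identity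
    (u w : ℝ → ℝ) (g : ℝ)
    (hu : ContinuousOn u (Ici 0)) (hw : ContinuousOn w (Ici 0))
    (A B v D : ℝ → ℝ)
    (hA : ∀ x, A x = ∫ y in (0 : ℝ)..x, u y * w y)
    (hB : ∀ x, B x = ∫ y in (0 : ℝ)..x, w y ^ 2)
    (hv : ∀ x, v x = u x - g ^ 2 * w x * A x / (1 + g ^ 2 * B x))
    (hD : ∀ x, D x = g ^ 2 * A x ^ 2 / (1 + g ^ 2 * B x)) :
    (∀ x ∈ Ici (0 : ℝ), DifferentiableWithinAt ℝ D (Ici 0) x) ∧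
    (∀ x ∈ Ici (0 : ℝ), v x ^ 2 = u x ^ 2 - derivWithin D (Ici 0) x) := by
  -- denominator is positive
  have hden : ∀ x ∈ Ici (0:ℝ), 0 < 1 + g ^ 2 * B x := by
    intro x hx
    have hBnn : 0 ≤ B x := by
      rw [hB x]
      exact intervalIntegral.integral_nonneg hx (fun y _ => sq_nonneg _)
    positivity
  have hDderiv : ∀ x ∈ Ici (0:ℝ), HasDerivWithinAt D
      ((g ^ 2 * (2 * A x * (u x * w x)) * (1 + g ^ 2 * B x)
        - g ^ 2 * A x ^ 2 * (g ^ 2 * w x ^ 2)) / (1 + g ^ 2 * B x) ^ 2) (Ici 0) x := by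
    intro x hx
    have hA' : HasDerivWithinAt A (u x * w x) (Ici 0) x := by
      have := ftc_ici (hu.mul hw) hx
      exact this.congr (fun y _ => (hA y)) (hA x)
    have hB' : HasDerivWithinAt B (w x ^ 2) (Ici 0) x := by
      have := ftc_ici (f := fun y => w y ^ 2) (hw.pow 2) hx
      exact this.congr (fun y _ => (hB y)) (hB x)
    have hnum : HasDerivWithinAt (fun x => g ^ 2 * A x ^ 2)
        (g ^ 2 * (2 * A x * (u x * w x))) (Ici 0) x := by
      have := ((hA'.pow 2).const_mul (g ^ 2))
      simpa [Nat.sub_self, mul_comm, mul_left_comm, mul_assoc] using this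
    have hden' : HasDerivWithinAt (fun x => 1 + g ^ 2 * B x) (g ^ 2 * w x ^ 2) (Ici 0) x :=
      ((hB'.const_mul (g ^ 2)).const_add 1)
    have := hnum.div hden' (ne_of_gt (hden x hx))
    exact this.congr (fun y _ => hD y) (hD x)
  constructor
  · exact fun x hx => (hDderiv x hx).differentiableWithinAt
  · intro x hx
    have hdw := (hDderiv x hx).derivWithin (uniqueDiffOn_Ici 0 x hx)
    rw [hdw, hv x]
    have h0 := ne_of_gt (hden x hx)
    field_simp
    ring
end

section
/- Let u, w : [0,∞) → ℝ be continuous and let g be a real number. Define A(x) = ∫₀ˣ u(y)w(y) dy, B(x) = ∫₀ˣ w(y)² dy, and v(x) = u(x) − g²w(x)A(x)/(1 + g²B(x)). Suppose that u² is integrable on (0,∞) and that g²A(x)²/(1 + g²B(x)) → 0 as x → ∞. Then v² is integrable on (0,∞) and ∫₀^∞ v(x)² dx = ∫₀^∞ u(x)² dx. -/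
open Set MeasureTheory intervalIntegral Filter

/-- Abstract form of Theorem 3.4: the normalization integral of a bound-state
solution is unchanged under the Darboux transformation. -/
theorem darboux_norming_invariance
    (u w : ℝ → ℝ) (g : ℝ)
    (hu : ContinuousOn u (Ici 0)) (hw : ContinuousOn w (Ici 0))
    (A B v : ℝ → ℝ)
    (hA : ∀ x, A x = ∫ y in (0 : ℝ)..x, u y * w y)
    (hB : ∀ x, B x = ∫ y in (0 : ℝ)..x, w y ^ 2)
    (hv : ∀ x, v x = u x - g ^ 2 * w x * A x / (1 + g ^ 2 * B x))
    (hu2 : IntegrableOn (fun x => u x ^ 2) (Ioi 0))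
    (hlim : Tendsto (fun x => g ^ 2 * A x ^ 2 / (1 + g ^ 2 * B x)) atTop (nhds 0)) :
    IntegrableOn (fun x => v x ^ 2) (Ioi 0) ∧
    ∫ x in Ioi (0 : ℝ), v x ^ 2 = ∫ x in Ioi (0 : ℝ), u x ^ 2 := by
  -- Extend u, w to continuous functions on all of ℝ
  set U : ℝ → ℝ := fun x => u (max x 0) with hUdef
  set W : ℝ → ℝ := fun x => w (max x 0) with hWdef
  have hmax : ∀ x : ℝ, max x 0 ∈ Ici (0:ℝ) := fun x => le_max_right x 0
  have hU : Continuous U := hu.comp_continuous (continuous_id.max continuous_const) hmax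
  have hW : Continuous W := hw.comp_continuous (continuous_id.max continuous_const) hmax
  have hUeq : ∀ x : ℝ, 0 ≤ x → U x = u x := fun x hx => by simp [hUdef, max_eq_left hx]
  have hWeq : ∀ x : ℝ, 0 ≤ x → W x = w x := fun x hx => by simp [hWdef, max_eq_left hx]
  set A2 : ℝ → ℝ := fun x => ∫ y in (0:ℝ)..x, U y * W y with hA2def
  set B2 : ℝ → ℝ := fun x => ∫ y in (0:ℝ)..x, W y ^ 2 with hB2def
  have hAeq : ∀ x : ℝ, 0 ≤ x → A2 x = A x := by
    intro x hx
    rw [hA x, hA2def]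
    apply intervalIntegral.integral_congr
    intro y hy
    rw [uIcc_of_le hx] at hy
    simp only [hUeq y hy.1, hWeq y hy.1]
  have hBeq : ∀ x : ℝ, 0 ≤ x → B2 x = B x := by
    intro x hx
    rw [hB x, hB2def]
    apply intervalIntegral.integral_congr
    intro y hy
    rw [uIcc_of_le hx] at hy
    simp only [hWeq y hy.1]
  have hA2d : ∀ x : ℝ, HasDerivAt A2 (U x * W x) x :=
    fun x => ((hU.mul hW).integral_hasStrictDerivAt 0 x).hasDerivAt
  have hB2d : ∀ x : ℝ, HasDerivAt B2 (W x ^ 2) x :=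
    fun x => ((hW.pow 2).integral_hasStrictDerivAt 0 x).hasDerivAt
  have hden : ∀ x : ℝ, 0 ≤ x → 0 < 1 + g ^ 2 * B2 x := by
    intro x hx
    have hB2nn : 0 ≤ B2 x :=
      intervalIntegral.integral_nonneg hx (fun y _ => sq_nonneg (W y))
    nlinarith [sq_nonneg g]
  set V : ℝ → ℝ := fun x => U x - g ^ 2 * W x * A2 x / (1 + g ^ 2 * B2 x) with hVdef
  have hveq : ∀ x : ℝ, 0 ≤ x → V x = v x := by
    intro x hx
    rw [hv x, hVdef]
    simp only [hUeq x hx, hWeq x hx, hAeq x hx, hBeq x hx]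
  set F : ℝ → ℝ := fun x => g ^ 2 * A2 x ^ 2 / (1 + g ^ 2 * B2 x) with hFdef
  have hFd : ∀ x : ℝ, 0 ≤ x → HasDerivAt F (U x ^ 2 - V x ^ 2) x := by
    intro x hx
    have hne : (1 + g ^ 2 * B2 x) ≠ 0 := ne_of_gt (hden x hx)
    have h1 : HasDerivAt (fun y => g ^ 2 * A2 y ^ 2)
        (g ^ 2 * (2 * A2 x * (U x * W x))) x := by
      have := ((hA2d x).pow 2).const_mul (g ^ 2)
      exact this.congr_deriv (by ring)
    have h2 : HasDerivAt (fun y => 1 + g ^ 2 * B2 y) (g ^ 2 * W x ^ 2) x :=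
      ((hB2d x).const_mul (g ^ 2)).const_add 1
    have := h1.div h2 hne
    refine this.congr_deriv ?_
    rw [hVdef]
    field_simp
    ring
  have hVcont : ContinuousOn V (Ici 0) := by
    apply ContinuousOn.sub hU.continuousOn
    apply ContinuousOn.div
    · have hA2c : Continuous A2 := continuous_iff_continuousAt.2 fun x => (hA2d x).continuousAt
      exact ((continuous_const.mul hW).mul hA2c).continuousOn
    · have hB2c : Continuous B2 := continuous_iff_continuousAt.2 fun x => (hB2d x).continuousAt
      exact (continuous_const.add (continuous_const.mul hB2c)).continuousOn
    · intro x hx; exact ne_of_gt (hden x hx)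
  -- key interval identity
  have key : ∀ T : ℝ, 0 ≤ T →
      (∫ x in (0:ℝ)..T, V x ^ 2) = (∫ x in (0:ℝ)..T, U x ^ 2) - F T := by
    intro T hT
    have hUi : IntervalIntegrable (fun x => U x ^ 2) volume 0 T :=
      ((hU.pow 2).continuousOn).intervalIntegrable
    have hVi : IntervalIntegrable (fun x => V x ^ 2) volume 0 T := by
      apply ContinuousOn.intervalIntegrable
      rw [uIcc_of_le hT]
      exact (hVcont.mono (Icc_subset_Ici_self)).pow 2
    have hGi : IntervalIntegrable (fun x => U x ^ 2 - V x ^ 2) volume 0 T := hUi.sub hVi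
    have hftc : (∫ x in (0:ℝ)..T, (U x ^ 2 - V x ^ 2)) = F T - F 0 := by
      apply intervalIntegral.integral_eq_sub_of_hasDerivAt
      · intro x hx
        rw [uIcc_of_le hT] at hx
        exact hFd x hx.1
      · exact hGi
    have hF0 : F 0 = 0 := by
      simp [hFdef, hA2def, intervalIntegral.integral_same]
    rw [intervalIntegral.integral_sub hUi hVi, hF0, sub_zero] at hftc
    linarith
  have hkey' : ∀ T : ℝ, 0 ≤ T →
      (∫ x in (0:ℝ)..T, v x ^ 2) = (∫ x in (0:ℝ)..T, u x ^ 2) - F T := by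
    intro T hT
    have e1 : (∫ x in (0:ℝ)..T, v x ^ 2) = ∫ x in (0:ℝ)..T, V x ^ 2 := by
      apply intervalIntegral.integral_congr
      intro y hy
      rw [uIcc_of_le hT] at hy
      simp only [hveq y hy.1]
    have e2 : (∫ x in (0:ℝ)..T, u x ^ 2) = ∫ x in (0:ℝ)..T, U x ^ 2 := by
      apply intervalIntegral.integral_congr
      intro y hy
      rw [uIcc_of_le hT] at hy
      simp only [hUeq y hy.1]
    rw [e1, e2, key T hT]
  -- limits
  have hFlim : Tendsto F atTop (nhds 0) := by
    apply hlim.congr'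
    filter_upwards [eventually_ge_atTop (0:ℝ)] with x hx
    rw [hFdef]
    simp only [hAeq x hx, hBeq x hx]
  have hulim : Tendsto (fun T => ∫ x in (0:ℝ)..T, u x ^ 2) atTop
      (nhds (∫ x in Ioi (0:ℝ), u x ^ 2)) :=
    intervalIntegral_tendsto_integral_Ioi 0 hu2 tendsto_id
  have hvlim : Tendsto (fun T => ∫ x in (0:ℝ)..T, v x ^ 2) atTop
      (nhds (∫ x in Ioi (0:ℝ), u x ^ 2)) := by
    have := hulim.sub hFlim
    rw [sub_zero] at this
    apply this.congr'
    filter_upwards [eventually_ge_atTop (0:ℝ)] with T hT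
    exact (hkey' T hT).symm
  have hvint : IntegrableOn (fun x => v x ^ 2) (Ioi 0) := by
    apply integrableOn_Ioi_of_intervalIntegral_norm_tendsto
      (∫ x in Ioi (0:ℝ), u x ^ 2) 0 (f := fun x => v x ^ 2) (b := fun T : ℝ => T)
      ?_ tendsto_id ?_
    · intro T
      rcases le_or_gt T 0 with h | h
      · rw [Ioc_eq_empty (by exact not_lt.2 h)]
        exact integrableOn_empty
      · have : IntervalIntegrable (fun x => v x ^ 2) volume 0 T := by
          apply IntervalIntegrable.congr_ae
            (g := fun x => v x ^ 2) (f := fun x => V x ^ 2)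
          · apply ContinuousOn.intervalIntegrable
            rw [uIcc_of_le h.le]
            exact (hVcont.mono (Icc_subset_Ici_self)).pow 2
          · rw [uIoc_of_le h.le]
            filter_upwards [ae_restrict_mem measurableSet_Ioc] with y hy
            simp only [hveq y hy.1.le]
        exact this.1
    · have hnorm : (fun x => ‖v x ^ 2‖) = fun x => v x ^ 2 :=
        funext fun x => by rw [Real.norm_eq_abs, abs_of_nonneg (sq_nonneg _)]
      simpa [hnorm] using hvlim
  refine ⟨hvint, ?_⟩
  exact tendsto_nhds_unique (intervalIntegral_tendsto_integral_Ioi 0 hvint tendsto_id) hvlim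
end

section
/- Let γ > 0, b ≥ 0, and let c be a nonzero real number. Suppose ψ : [0,∞) → ℝ is continuous and satisfies ψ(x) = c·e^{γx} for all x ≥ b, and suppose D := ψ(b)² − 2γ∫₀ᵇ ψ(y)² dy > 0. Set g² := 2γ/D. Then for every x ≥ b one has 2g²ψ(x)²/(1 + g²∫₀ˣ ψ(y)² dy) = 4γ. -/
open Set MeasureTheory intervalIntegral

/-- Sufficiency computation in Theorem 3.5: for a regular solution equal to
`c·e^{γx}` on `[b,∞)` and the eligible norming constant `g² = 2γ/D`, the
quantity `2g²ψ(x)²/(1 + g²∫₀ˣψ²)` is constant equal to `4γ` on `[b,∞)`. -/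
theorem darboux_add_preserves_support
    (γ b c : ℝ) (hγ : 0 < γ) (hb : 0 ≤ b) (hc : c ≠ 0) (ψ : ℝ → ℝ)
    (hψc : ContinuousOn ψ (Ici 0))
    (hψ : ∀ x, b ≤ x → ψ x = c * Real.exp (γ * x))
    (D : ℝ) (hD : D = ψ b ^ 2 - 2 * γ * ∫ y in (0 : ℝ)..b, ψ y ^ 2)
    (hDpos : 0 < D)
    (g2 : ℝ) (hg2 : g2 = 2 * γ / D) :
    ∀ x, b ≤ x →
      2 * g2 * ψ x ^ 2 / (1 + g2 * ∫ y in (0 : ℝ)..x, ψ y ^ 2) = 4 * γ := by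
  intro x hx
  have hbx : b ≤ x := hx
  have hψ2c : ContinuousOn (fun y => ψ y ^ 2) (Ici 0) := hψc.pow 2
  have hint1 : IntervalIntegrable (fun y => ψ y ^ 2) volume 0 b := by
    apply ContinuousOn.intervalIntegrable
    apply hψ2c.mono
    rw [uIcc_of_le hb]
    exact Icc_subset_Ici_self
  have hint2 : IntervalIntegrable (fun y => ψ y ^ 2) volume b x := by
    apply ContinuousOn.intervalIntegrable
    apply hψ2c.mono
    rw [uIcc_of_le hbx]
    exact fun y hy => le_trans hb hy.1
  have hsplit : (∫ y in (0 : ℝ)..x, ψ y ^ 2)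
      = (∫ y in (0 : ℝ)..b, ψ y ^ 2) + ∫ y in b..x, ψ y ^ 2 :=
    (integral_add_adjacent_intervals hint1 hint2).symm
  have hI : (∫ y in b..x, ψ y ^ 2)
      = c ^ 2 * (Real.exp (2 * γ * x) - Real.exp (2 * γ * b)) / (2 * γ) := by
    have h1 : (∫ y in b..x, ψ y ^ 2)
        = ∫ y in b..x, c ^ 2 * Real.exp (2 * γ * y) := by
      apply integral_congr
      intro y hy
      rw [uIcc_of_le hbx] at hy
      show ψ y ^ 2 = c ^ 2 * Real.exp (2 * γ * y)
      rw [hψ y hy.1, mul_pow, ← Real.exp_nat_mul]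
      ring_nf
    rw [h1]
    have h2 : ∀ y ∈ uIcc b x, HasDerivAt
        (fun y => c ^ 2 * Real.exp (2 * γ * y) / (2 * γ))
        (c ^ 2 * Real.exp (2 * γ * y)) y := by
      intro y _
      have : HasDerivAt (fun y => 2 * γ * y) (2 * γ) y := by
        simpa using (hasDerivAt_id y).const_mul (2 * γ)
      have := (this.exp.const_mul (c ^ 2)).div_const (2 * γ)
      convert this using 1
      · rfl
      · rfl
      field_simp [hγ.ne']
    rw [integral_eq_sub_of_hasDerivAt h2 (by
      apply Continuous.intervalIntegrable
      continuity)]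
    ring
  have hψb : ψ b = c * Real.exp (γ * b) := hψ b le_rfl
  have hψx : ψ x = c * Real.exp (γ * x) := hψ x hbx
  have hDne : D ≠ 0 := ne_of_gt hDpos
  have hγne : γ ≠ 0 := ne_of_gt hγ
  have h2γI : 2 * γ * (∫ y in (0 : ℝ)..b, ψ y ^ 2)
      = c ^ 2 * Real.exp (2 * γ * b) - D := by
    rw [hD, hψb]
    rw [mul_pow, ← Real.exp_nat_mul]
    ring_nf
  have hden : 1 + g2 * ∫ y in (0 : ℝ)..x, ψ y ^ 2
      = c ^ 2 * Real.exp (2 * γ * x) / D := by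
    rw [hsplit, hI, hg2]
    field_simp
    linear_combination h2γI
  rw [hden, hψx, hg2, mul_pow, ← Real.exp_nat_mul]
  have he : Real.exp (2 * γ * x) ≠ 0 := Real.exp_ne_zero _
  have hc2 : c ^ 2 ≠ 0 := pow_ne_zero 2 hc
  have h2 : ((2 : ℕ) : ℝ) * (γ * x) = 2 * γ * x := by push_cast; ring
  rw [h2]
  field_simp
  ring
end

section
/- Let j be a natural number, let γ₁, …, γ_j be positive real numbers, and let γ > 0 satisfy γ ≠ γ_s for every s = 1, …, j. Let H₀ : ℝ → ℝ be differentiable at −γ with H₀(−γ) = 0, and define H_j(β) = H₀(β)·∏_{s=1}^{j} (β − γ_s)/(β + γ_s) for β ∉ {−γ₁, …, −γ_j}. Then H_j is differentiable at −γ, H_j(−γ) = 0, and H_j'(−γ)·H_j(γ) = H₀'(−γ)·H₀(γ). In particular H_j'(−γ)·H_j(γ) > 0 if and only if H₀'(−γ)·H₀(γ) > 0. -/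
open Finset Filter

/-- Computational content of Theorem 3.10: the eligibility criterion
`H'(−γ)·H(γ) > 0` is invariant under adding bound states. -/
theorem eligibility_invariance
    (j : ℕ) (γs : Fin j → ℝ) (hγs : ∀ s, 0 < γs s)
    (γ : ℝ) (hγ : 0 < γ) (hne : ∀ s, γ ≠ γs s)
    (H0 Hj : ℝ → ℝ)
    (hH0d : DifferentiableAt ℝ H0 (-γ)) (hH00 : H0 (-γ) = 0)
    (hHj : ∀ β : ℝ, (∀ s, β ≠ -γs s) →
      Hj β = H0 β * ∏ s : Fin j, (β - γs s) / (β + γs s)) :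
    DifferentiableAt ℝ Hj (-γ) ∧ Hj (-γ) = 0 ∧
    deriv Hj (-γ) * Hj γ = deriv H0 (-γ) * H0 γ ∧
    (0 < deriv Hj (-γ) * Hj γ ↔ 0 < deriv H0 (-γ) * H0 γ) := by
  set P : ℝ → ℝ := fun β => ∏ s : Fin j, (β - γs s) / (β + γs s) with hP
  set g : ℝ → ℝ := fun β => H0 β * P β with hg
  have hden : ∀ s, -γ + γs s ≠ 0 := by
    intro s h
    exact hne s (by linarith)
  have hdenγ : ∀ s, γ + γs s ≠ 0 := fun s => by
    have := hγs s; positivity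
  have heq : Hj =ᶠ[nhds (-γ)] g := by
    have h1 : ∀ᶠ β in nhds (-γ), ∀ s, β ≠ -γs s := by
      refine Filter.eventually_all.2 ?_
      intro s
      have : -γ ≠ -γs s := fun h => hne s (by linarith [neg_injective h])
      exact eventually_ne_nhds this
    filter_upwards [h1] with β hβ
    exact hHj β hβ
  have hPd : DifferentiableAt ℝ P (-γ) := by
    apply DifferentiableAt.fun_finsetProd
    intro s _
    exact ((differentiableAt_id.sub_const _).div
      ((differentiableAt_id.add_const _)) (hden s))
  have hgd : DifferentiableAt ℝ g (-γ) := hH0d.mul hPd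
  have hHjd : DifferentiableAt ℝ Hj (-γ) := hgd.congr_of_eventuallyEq heq
  have hHj0 : Hj (-γ) = 0 := by
    rw [hHj (-γ) (fun s h => hne s (by linarith [neg_injective h])), hH00, zero_mul]
  have hderiv : deriv Hj (-γ) = deriv H0 (-γ) * P (-γ) := by
    rw [Filter.EventuallyEq.deriv_eq heq, hg]
    rw [deriv_fun_mul hH0d hPd, hH00, zero_mul, add_zero]
  have hHjγ : Hj γ = H0 γ * P γ := by
    apply hHj
    intro s h
    have := hγs s; linarith
  have hPP : P (-γ) * P γ = 1 := by
    rw [hP]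
    simp only [← Finset.prod_mul_distrib]
    rw [Finset.prod_eq_one]
    intro s _
    have h1 := hden s
    have h2 := hdenγ s
    field_simp
    ring
  have hkey : deriv Hj (-γ) * Hj γ = deriv H0 (-γ) * H0 γ := by
    rw [hderiv, hHjγ]
    calc deriv H0 (-γ) * P (-γ) * (H0 γ * P γ)
        = deriv H0 (-γ) * H0 γ * (P (-γ) * P γ) := by ring
      _ = deriv H0 (-γ) * H0 γ := by rw [hPP, mul_one]
  exact ⟨hHjd, hHj0, hkey, by rw [hkey]⟩
end

section
/- Let H : ℝ → ℝ be continuous and differentiable, and suppose the set S = {β ∈ ℝ : β < 0 and H(β) = 0} is finite. Then the number of elements β of S with H'(β) > 0 is at most one more than the number of elements β of S with H'(β) ≤ 0. -/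
open Set Filter Topology

lemma pos_right_of_deriv_pos (H : ℝ → ℝ) (hd : Differentiable ℝ H) {β : ℝ}
    (h0 : H β = 0) (h' : 0 < deriv H β) : ∀ᶠ x in 𝓝[>] β, 0 < H x := by
  have hs := (hd β).hasDerivAt
  rw [hasDerivAt_iff_tendsto_slope] at hs
  have h1 : ∀ᶠ x in 𝓝[≠] β, 0 < slope H β x := hs.eventually (eventually_gt_nhds h')
  have h2 : ∀ᶠ x in 𝓝[>] β, 0 < slope H β x :=
    h1.filter_mono (nhdsWithin_mono β fun x hx => ne_of_gt hx)
  filter_upwards [h2, self_mem_nhdsWithin] with x hx hx'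
  have hxβ : (0:ℝ) < x - β := sub_pos.mpr hx'
  have : slope H β x = H x / (x - β) := by simp [slope_def_field, h0]
  rw [this] at hx
  have := mul_pos hx hxβ
  rwa [div_mul_cancel₀] at this
  exact ne_of_gt hxβ

lemma neg_left_of_deriv_pos (H : ℝ → ℝ) (hd : Differentiable ℝ H) {β : ℝ}
    (h0 : H β = 0) (h' : 0 < deriv H β) : ∀ᶠ x in 𝓝[<] β, H x < 0 := by
  have hs := (hd β).hasDerivAt
  rw [hasDerivAt_iff_tendsto_slope] at hs
  have h1 : ∀ᶠ x in 𝓝[≠] β, 0 < slope H β x := hs.eventually (eventually_gt_nhds h')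
  have h2 : ∀ᶠ x in 𝓝[<] β, 0 < slope H β x :=
    h1.filter_mono (nhdsWithin_mono β fun x hx => ne_of_lt hx)
  filter_upwards [h2, self_mem_nhdsWithin] with x hx hx'
  have hxβ : x - β < 0 := sub_neg.mpr hx'
  have : slope H β x = H x / (x - β) := by simp [slope_def_field, h0]
  rw [this] at hx
  rcases div_pos_iff.mp hx with ⟨_, h⟩ | ⟨h, _⟩
  · linarith
  · exact h

lemma key_lemma (H : ℝ → ℝ) (hc : Continuous H) (hd : Differentiable ℝ H)
    {a b : ℝ} (hab : a < b) (ha : H a = 0) (hb : H b = 0)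
    (hno : ∀ x ∈ Set.Ioo a b, H x ≠ 0) (ha' : 0 < deriv H a) : deriv H b ≤ 0 := by
  by_contra hb'
  push_neg at hb'
  have hmem1 : Ioo a b ∈ 𝓝[>] a := Ioo_mem_nhdsGT_of_mem ⟨le_refl a, hab⟩
  have hmem2 : Ioo a b ∈ 𝓝[<] b := Ioo_mem_nhdsLT_of_mem ⟨hab, le_refl b⟩
  obtain ⟨x1, hx1p, hx1m⟩ :=
    ((pos_right_of_deriv_pos H hd ha ha').and (eventually_of_mem hmem1 fun x h => h)).exists
  obtain ⟨x2, hx2n, hx2m⟩ :=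
    ((neg_left_of_deriv_pos H hd hb hb').and (eventually_of_mem hmem2 fun x h => h)).exists
  have h0 : (0:ℝ) ∈ uIcc (H x1) (H x2) := by
    rw [Set.mem_uIcc]; right; exact ⟨le_of_lt hx2n, le_of_lt hx1p⟩
  obtain ⟨c, hcmem, hc0⟩ := intermediate_value_uIcc (hc.continuousOn) h0
  have hcIoo : c ∈ Ioo a b := Set.ordConnected_Ioo.uIcc_subset hx1m hx2m hcmem
  exact hno c hcIoo hc0


/-- Abstract form of Proposition 3.11(d): among the finitely many negative
zeros of `H`, the number with positive derivative is at most one more than the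
number with nonpositive derivative. -/
theorem eligible_le_one_add_ineligible
    (H : ℝ → ℝ) (hc : Continuous H) (hd : Differentiable ℝ H)
    (hfin : {β : ℝ | β < 0 ∧ H β = 0}.Finite) :
    {β : ℝ | β < 0 ∧ H β = 0 ∧ 0 < deriv H β}.ncard
      ≤ 1 + {β : ℝ | β < 0 ∧ H β = 0 ∧ deriv H β ≤ 0}.ncard := by
  set S : Set ℝ := {β : ℝ | β < 0 ∧ H β = 0} with hS
  set E : Set ℝ := {β : ℝ | β < 0 ∧ H β = 0 ∧ 0 < deriv H β} with hE
  set I : Set ℝ := {β : ℝ | β < 0 ∧ H β = 0 ∧ deriv H β ≤ 0} with hI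
  have hES : E ⊆ S := fun β hβ => ⟨hβ.1, hβ.2.1⟩
  set E₀ : Set ℝ := {β ∈ E | ∃ γ ∈ S, β < γ} with hE0
  have hE0E : E₀ ⊆ E := fun β hβ => hβ.1
  -- at most one eligible zero with nothing above it
  have hsub : (E \ E₀).Subsingleton := by
    intro b1 h1 b2 h2
    by_contra hne
    rcases lt_or_gt_of_ne hne with h | h
    · exact h1.2 ⟨h1.1, b2, hES h2.1, h⟩
    · exact h2.2 ⟨h2.1, b1, hES h1.1, h⟩
  -- choose the next zero above each member of E₀
  have hnext : ∀ β : ℝ, β ∈ E₀ → ∃ γ, γ ∈ S ∧ β < γ ∧ ∀ x ∈ S, β < x → γ ≤ x := by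
    intro β hβ
    obtain ⟨_, γ0, hγ0S, hγ0⟩ := hβ
    have hTfin : (S ∩ Set.Ioi β).Finite := hfin.subset Set.inter_subset_left
    have hTne : (S ∩ Set.Ioi β).Nonempty := ⟨γ0, hγ0S, hγ0⟩
    obtain ⟨γ, hγ, hmin⟩ := Set.exists_min_image _ id hTfin hTne
    exact ⟨γ, hγ.1, hγ.2, fun x hxS hβx => hmin x ⟨hxS, hβx⟩⟩
  choose! f hfS hflt hfmin using hnext
  -- the next zero is ineligible
  have hmaps : ∀ β ∈ E₀, f β ∈ I := by
    intro β hβ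
    have hβE := hE0E hβ
    have hfSβ := hfS β hβ
    refine ⟨hfSβ.1, hfSβ.2, ?_⟩
    apply key_lemma H hc hd (hflt β hβ) hβE.2.1 hfSβ.2
    · intro x hx hx0
      have hxS : x ∈ S := ⟨hx.2.trans hfSβ.1, hx0⟩
      exact absurd (hfmin β hβ x hxS hx.1) (not_le.mpr hx.2)
    · exact hβE.2.2
  have hinj : Set.InjOn f E₀ := by
    have haux : ∀ b1 ∈ E₀, ∀ b2 ∈ E₀, b1 < b2 → f b1 ≠ f b2 := by
      intro b1 h1 b2 h2 hlt heq
      have h1' : f b1 ≤ b2 := hfmin b1 h1 b2 (hES (hE0E h2)) hlt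
      have h2' : b2 < f b2 := hflt b2 h2
      rw [heq] at h1'
      exact absurd h1' (not_le.mpr h2')
    intro b1 h1 b2 h2 heq
    by_contra hne
    rcases lt_or_gt_of_ne hne with h | h
    · exact haux b1 h1 b2 h2 h heq
    · exact haux b2 h2 b1 h1 h heq.symm
  have hIfin : I.Finite := hfin.subset fun β hβ => ⟨hβ.1, hβ.2.1⟩
  have h1 : E₀.ncard ≤ I.ncard := Set.ncard_le_ncard_of_injOn f hmaps hinj hIfin
  have h2 : (E \ E₀).ncard ≤ 1 := by
    rcases hsub.eq_empty_or_singleton with h | ⟨a, h⟩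
    · simp [h]
    · simp [h]
  calc E.ncard = (E₀ ∪ (E \ E₀)).ncard := by rw [Set.union_diff_cancel hE0E]
    _ ≤ E₀.ncard + (E \ E₀).ncard := Set.ncard_union_le _ _
    _ ≤ I.ncard + 1 := add_le_add h1 h2
    _ = 1 + I.ncard := add_comm _ _
end

section
/- Let L, T, h : ℂ → ℂ be analytic at 0 and suppose that, for all k in some neighborhood of 0, both L(k)L(−k) + T(k)T(−k) = 1 and h(k)·T(k) = 1 + L(k). Suppose L(0) = −1, T(0) = 0, and h(0) = 0. Then L'(0) = 0 and L''(0) = −T'(0)². -/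
open Filter

lemma analyticAt_deriv (f : ℂ → ℂ) {x : ℂ} (hf : AnalyticAt ℂ f x) :
    AnalyticAt ℂ (deriv f) x := by
  have h2 : AnalyticAt ℂ (fun y => fderiv ℂ f y 1) x :=
    ((ContinuousLinearMap.apply ℂ ℂ (1 : ℂ)).analyticAt _).comp hf.fderiv
  simpa only [fderiv_apply_one_eq_deriv] using h2

lemma mulneg_hasDerivAt (f g : ℂ → ℂ) {k : ℂ}
    (hf : DifferentiableAt ℂ f k) (hg : DifferentiableAt ℂ g (-k)) :
    HasDerivAt (fun x => f x * g (-x)) (deriv f k * g (-k) - f k * deriv g (-k)) k := by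
  have h2 : HasDerivAt (fun x : ℂ => g (-x)) (deriv g (-k) * (-1)) k :=
    (hg.hasDerivAt).comp k (hasDerivAt_neg k)
  have := (hf.hasDerivAt).mul h2
  refine this.congr_deriv ?_
  ring

lemma eventually_neg_analytic (g : ℂ → ℂ) (hg : AnalyticAt ℂ g 0) :
    ∀ᶠ k in nhds (0 : ℂ), AnalyticAt ℂ g (-k) := by
  have hten : Tendsto (fun k : ℂ => -k) (nhds 0) (nhds 0) := by
    simpa using (continuous_neg.tendsto (0 : ℂ))
  exact hten.eventually hg.eventually_analyticAt

lemma key2 (f g u v : ℂ → ℂ)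
    (hf : AnalyticAt ℂ f 0) (hg : AnalyticAt ℂ g 0)
    (hu : AnalyticAt ℂ u 0) (hv : AnalyticAt ℂ v 0) :
    iteratedDeriv 2 (fun x => f x * g (-x) + u x * v (-x)) 0 =
      (deriv (deriv f) 0 * g 0 - 2 * deriv f 0 * deriv g 0 + f 0 * deriv (deriv g) 0)
      + (deriv (deriv u) 0 * v 0 - 2 * deriv u 0 * deriv v 0 + u 0 * deriv (deriv v) 0) := by
  set F : ℂ → ℂ := fun x => f x * g (-x) + u x * v (-x) with hF
  have hev : ∀ᶠ k in nhds (0 : ℂ),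
      deriv F k = (deriv f k * g (-k) - f k * deriv g (-k))
        + (deriv u k * v (-k) - u k * deriv v (-k)) := by
    filter_upwards [hf.eventually_analyticAt, eventually_neg_analytic g hg,
      hu.eventually_analyticAt, eventually_neg_analytic v hv] with k h1 h2 h3 h4
    exact ((mulneg_hasDerivAt f g h1.differentiableAt h2.differentiableAt).add
      (mulneg_hasDerivAt u v h3.differentiableAt h4.differentiableAt)).deriv
  have h2eq : iteratedDeriv 2 F 0 = deriv (deriv F) 0 := by
    simp [iteratedDeriv_succ, iteratedDeriv_one]
  rw [h2eq, Filter.EventuallyEq.deriv_eq hev]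
  have hD : HasDerivAt (fun k => (deriv f k * g (-k) - f k * deriv g (-k))
        + (deriv u k * v (-k) - u k * deriv v (-k)))
      (((deriv (deriv f) 0 * g (-(0:ℂ)) - deriv f 0 * deriv g (-(0:ℂ)))
        - (deriv f 0 * deriv g (-(0:ℂ)) - f 0 * deriv (deriv g) (-(0:ℂ))))
       + ((deriv (deriv u) 0 * v (-(0:ℂ)) - deriv u 0 * deriv v (-(0:ℂ)))
        - (deriv u 0 * deriv v (-(0:ℂ)) - u 0 * deriv (deriv v) (-(0:ℂ))))) 0 := by
    have hg0 : AnalyticAt ℂ g (-(0:ℂ)) := by simpa using hg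
    have hv0 : AnalyticAt ℂ v (-(0:ℂ)) := by simpa using hv
    exact (((mulneg_hasDerivAt (deriv f) g (analyticAt_deriv f hf).differentiableAt hg0.differentiableAt).sub
        (mulneg_hasDerivAt f (deriv g) hf.differentiableAt (analyticAt_deriv g hg0).differentiableAt)).add
      ((mulneg_hasDerivAt (deriv u) v (analyticAt_deriv u hu).differentiableAt hv0.differentiableAt).sub
        (mulneg_hasDerivAt u (deriv v) hu.differentiableAt (analyticAt_deriv v hv0).differentiableAt)))
  rw [hD.deriv]
  simp only [neg_zero]
  ring

/-- Theorem 2.2(a): in the Dirichlet exceptional case the left reflection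
coefficient satisfies `L'(0) = 0` and `L''(0) = −T'(0)²`. -/
theorem dirichlet_exceptional_reflection
    (L T h : ℂ → ℂ)
    (hL : AnalyticAt ℂ L 0) (hT : AnalyticAt ℂ T 0) (hh : AnalyticAt ℂ h 0)
    (huni : ∀ᶠ k in nhds (0 : ℂ), L k * L (-k) + T k * T (-k) = 1)
    (hrel : ∀ᶠ k in nhds (0 : ℂ), h k * T k = 1 + L k)
    (hL0 : L 0 = -1) (hT0 : T 0 = 0) (hh0 : h 0 = 0) :
    deriv L 0 = 0 ∧ iteratedDeriv 2 L 0 = -(deriv T 0) ^ 2 := by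
  -- first part: L'(0) = 0
  have hLrel : ∀ᶠ k in nhds (0 : ℂ), L k = h k * T k - 1 := by
    filter_upwards [hrel] with k hk; linear_combination -hk
  have hd1 : HasDerivAt (fun k => h k * T k - 1)
      (deriv h 0 * T 0 + h 0 * deriv T 0) 0 :=
    ((hh.differentiableAt.hasDerivAt).mul (hT.differentiableAt.hasDerivAt)).sub_const 1
  have hL' : deriv L 0 = 0 := by
    rw [Filter.EventuallyEq.deriv_eq hLrel, hd1.deriv, hT0, hh0]
    ring
  refine ⟨hL', ?_⟩
  -- second part via unitarity
  have hkey := key2 L L T T hL hL hT hT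
  have hFconst : (fun x => L x * L (-x) + T x * T (-x)) =ᶠ[nhds (0 : ℂ)]
      (fun _ => (1 : ℂ)) := huni
  have hzero : iteratedDeriv 2 (fun x => L x * L (-x) + T x * T (-x)) 0 = 0 := by
    have hdF : deriv (fun x => L x * L (-x) + T x * T (-x)) =ᶠ[nhds (0:ℂ)]
        deriv (fun _ : ℂ => (1 : ℂ)) := hFconst.deriv
    have : deriv (deriv (fun x => L x * L (-x) + T x * T (-x))) 0
        = deriv (deriv (fun _ : ℂ => (1 : ℂ))) 0 := hdF.deriv_eq
    simpa [iteratedDeriv_succ, iteratedDeriv_one] using this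
  rw [hkey] at hzero
  have hL2 : iteratedDeriv 2 L 0 = deriv (deriv L) 0 := by
    simp [iteratedDeriv_succ, iteratedDeriv_one]
  rw [hL2]
  rw [hL0, hT0, hL'] at hzero
  linear_combination -hzero / 2
end

section
/- Let h, G : ℂ → ℂ be entire functions such that G(k) ≠ 0 for every k with Im k ≥ 0, and such that h(k)·G(−k) = h(−k)·G(k) for every real k. Suppose that for every ε > 0 there exists r > 0 such that |h(k)| ≤ ε·|G(k)| whenever Im k ≥ 0 and |k| ≥ r. Then h is identically zero. -/
open Filter Set

/-- An entire function vanishing on the reals vanishes everywhere. -/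
lemma entire_zero_of_real_zero (f : ℂ → ℂ) (hf : Differentiable ℂ f)
    (hz : ∀ x : ℝ, f x = 0) : ∀ z : ℂ, f z = 0 := by
  have hfa : AnalyticOnNhd ℂ f univ :=
    Complex.analyticOnNhd_univ_iff_differentiable.mpr hf
  have hfreq : ∃ᶠ z in nhdsWithin (0 : ℂ) {(0 : ℂ)}ᶜ, f z = 0 := by
    set v : ℕ → ℝ := fun n => ((n : ℝ) + 1)⁻¹ with hv
    have hu : Tendsto (fun n : ℕ => ((v n : ℝ) : ℂ)) atTop
        (nhdsWithin (0 : ℂ) {(0 : ℂ)}ᶜ) := by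
      rw [tendsto_nhdsWithin_iff]
      constructor
      · have h1 : Tendsto v atTop (nhds 0) :=
          tendsto_one_div_add_atTop_nhds_zero_nat.congr (by simp [hv, one_div])
        have := (Complex.continuous_ofReal.tendsto 0).comp h1
        exact this
      · filter_upwards with n
        simp only [mem_compl_iff, mem_singleton_iff]
        intro hc
        have h0 : v n = (0 : ℝ) := by exact_mod_cast hc
        have hp : (0:ℝ) < v n := by positivity
        simp_all
    exact hu.frequently (Frequently.of_forall fun n => hz _)
  intro z
  have := hfa.eqOn_zero_of_preconnected_of_frequently_eq_zero
    isPreconnected_univ (mem_univ (0 : ℂ)) hfreq (mem_univ z)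
  simpa using this

/-- Liouville-type uniqueness lemma underlying case (ii) of Section 4. -/
theorem liouville_uniqueness_zero
    (h G : ℂ → ℂ) (hh : Differentiable ℂ h) (hG : Differentiable ℂ G)
    (hGne : ∀ k : ℂ, 0 ≤ k.im → G k ≠ 0)
    (hfe : ∀ x : ℝ, h x * G (-(x : ℂ)) = h (-(x : ℂ)) * G x)
    (hbd : ∀ ε : ℝ, 0 < ε → ∃ r : ℝ, 0 < r ∧ ∀ k : ℂ, 0 ≤ k.im →
      r ≤ ‖k‖ → ‖h k‖ ≤ ε * ‖G k‖) :
    ∀ k : ℂ, h k = 0 := by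
  -- Step 1: the functional equation holds on all of ℂ.
  have hfe' : ∀ k : ℂ, h k * G (-k) = h (-k) * G k := by
    have := entire_zero_of_real_zero (fun k => h k * G (-k) - h (-k) * G k)
      (by
        apply Differentiable.sub
        · exact (hh.mul (hG.comp differentiable_neg))
        · exact ((hh.comp differentiable_neg).mul hG))
      (fun x => by simpa [sub_eq_zero] using hfe x)
    intro k
    have := this k
    simpa [sub_eq_zero] using this
  -- Step 2: define the glued quotient F.
  set F : ℂ → ℂ := fun k => if 0 ≤ k.im then h k / G k else h (-k) / G (-k) with hF
  have hFup : ∀ k : ℂ, 0 ≤ k.im → F k = h k / G k := fun k hk => by simp [hF, hk]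
  -- F is entire.
  have hFd : Differentiable ℂ F := by
    intro z
    rcases lt_or_ge 0 z.im with hz | hz
    · -- upper half plane: F = h/G near z
      have hGz : G z ≠ 0 := hGne z hz.le
      have hdiff : DifferentiableAt ℂ (fun k => h k / G k) z :=
        (hh z).div (hG z) hGz
      refine hdiff.congr_of_eventuallyEq ?_
      have : {k : ℂ | 0 < k.im} ∈ nhds z :=
        (isOpen_lt continuous_const Complex.continuous_im).mem_nhds hz
      filter_upwards [this] with k hk
      simp [hF, le_of_lt hk]
    · -- Im z ≤ 0: F = h(-·)/G(-·) near z
      have hGz : G (-z) ≠ 0 := hGne (-z) (by simpa using neg_nonneg.mpr hz)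
      have hdiff : DifferentiableAt ℂ (fun k => h (-k) / G (-k)) z := by
        have h1 : DifferentiableAt ℂ (fun k : ℂ => h (-k)) z :=
          (hh (-z)).comp z differentiable_neg.differentiableAt
        have h2 : DifferentiableAt ℂ (fun k : ℂ => G (-k)) z :=
          (hG (-z)).comp z differentiable_neg.differentiableAt
        exact h1.div h2 hGz
      refine hdiff.congr_of_eventuallyEq ?_
      have hopen : IsOpen {k : ℂ | G (-k) ≠ 0} :=
        isOpen_compl_iff.mpr (IsClosed.preimage (hG.continuous.comp continuous_neg)
          isClosed_singleton) |>.mono le_rfl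
      have hmem : {k : ℂ | G (-k) ≠ 0} ∈ nhds z := by
        have : IsOpen {k : ℂ | G (-k) ≠ 0} := by
          have : {k : ℂ | G (-k) ≠ 0} = (fun k => G (-k)) ⁻¹' {0}ᶜ := rfl
          rw [this]
          exact (isOpen_compl_singleton).preimage (hG.continuous.comp continuous_neg)
        exact this.mem_nhds hGz
      filter_upwards [hmem] with k hk
      by_cases hki : 0 ≤ k.im
      · have hGk : G k ≠ 0 := hGne k hki
        have heq : h k / G k = h (-k) / G (-k) :=
          div_eq_div_iff hGk hk |>.mpr (hfe' k)
        simpa [hF, hki] using heq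
      · simp [hF, hki]
  -- Step 3: F is bounded.
  obtain ⟨r, hr, hrb⟩ := hbd 1 one_pos
  have hFbd1 : ∀ k : ℂ, r ≤ ‖k‖ → ‖F k‖ ≤ 1 := by
    intro k hk
    by_cases hki : 0 ≤ k.im
    · have hGk : G k ≠ 0 := hGne k hki
      rw [hFup k hki, norm_div]
      rw [div_le_one (norm_pos_iff.mpr hGk)]
      simpa using hrb k hki hk
    · have hki' : 0 ≤ (-k).im := by simp; linarith [lt_of_not_ge hki]
      have hGk : G (-k) ≠ 0 := hGne _ hki'
      have : F k = h (-k) / G (-k) := by simp [hF, hki]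
      rw [this, norm_div, div_le_one (norm_pos_iff.mpr hGk)]
      simpa using hrb (-k) hki' (by simpa using hk)
  have hbdd : Bornology.IsBounded (range F) := by
    have hcomp : IsCompact (Metric.closedBall (0 : ℂ) r) := isCompact_closedBall _ _
    obtain ⟨C, hC⟩ := hcomp.exists_bound_of_continuousOn hFd.continuous.continuousOn
    rw [Metric.isBounded_iff_subset_closedBall 0]
    refine ⟨max C 1, ?_⟩
    rintro _ ⟨k, rfl⟩
    simp only [Metric.mem_closedBall, dist_zero_right]
    rcases le_or_gt (‖k‖) r with hk | hk
    · exact le_trans (hC k (by simpa [Metric.mem_closedBall] using hk)) (le_max_left _ _)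
    · exact le_trans (hFbd1 k hk.le) (le_max_right _ _)
  -- Step 4: F is constant, and the constant is 0.
  have hconst : ∀ k : ℂ, F k = F 0 := fun k => hFd.apply_eq_apply_of_bounded hbdd k 0
  have hF0 : F 0 = 0 := by
    by_contra hne
    obtain ⟨ε, hε, hεlt⟩ : ∃ ε : ℝ, 0 < ε ∧ ε < ‖F 0‖ :=
      ⟨‖F 0‖ / 2, by
        have := norm_pos_iff.mpr hne; positivity, by
        have : 0 < ‖F 0‖ := norm_pos_iff.mpr hne
        linarith⟩
    obtain ⟨s, hs, hsb⟩ := hbd ε hε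
    have him : (0:ℝ) ≤ ((s : ℂ)).im := by simp
    have habs : s ≤ ‖(s : ℂ)‖ := by
      rw [Complex.norm_real, Real.norm_eq_abs]; exact le_abs_self s
    have hGs : G s ≠ 0 := hGne _ him
    have : ‖F s‖ ≤ ε := by
      rw [hFup _ him, norm_div, div_le_iff₀ (norm_pos_iff.mpr hGs)]
      exact hsb _ him habs
    rw [hconst (s : ℂ)] at this
    linarith
  -- Step 5: h vanishes on the reals, hence everywhere.
  have hreal : ∀ x : ℝ, h x = 0 := by
    intro x
    have him : (0:ℝ) ≤ ((x : ℂ)).im := by simp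
    have hGx : G x ≠ 0 := hGne _ him
    have : (h x) / (G x) = 0 := by
      rw [← hFup _ him, hconst, hF0]
    exact (div_eq_zero_iff.mp this).resolve_right hGx
  exact entire_zero_of_real_zero h hh hreal
end

section
/- Let b > 0, let V : ℝ → ℝ be continuous, and let k ∈ ℂ. Suppose f, g : [0,b] → ℂ are twice differentiable with f''(x) = (V(x) − k²)f(x) and g''(x) = (V(x) − (conj k)²)g(x) for all x ∈ [0,b], and with terminal data f(b) = e^{ikb}, f'(b) = ik·e^{ikb}, g(b) = e^{−i(conj k)b}, g'(b) = −i(conj k)·e^{−i(conj k)b}. Then f(x) = conj(g(x)) for every x ∈ [0,b]. In particular f(0) = 0 if and only if g(0) = 0. -/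
open Set

/-- Symmetry assertion in the proof of Theorem 2.1(g): the Jost solution at
`−conj k` is the complex conjugate of the Jost solution at `k`; in particular
the zeros of the Jost function are symmetric about the imaginary axis. -/
theorem jost_solution_conjugate_symmetry
    (b : ℝ) (hb : 0 < b) (V : ℝ → ℝ) (hV : Continuous V) (k : ℂ)
    (f g : ℝ → ℂ)
    (hf : ∀ x ∈ Icc (0 : ℝ) b, DifferentiableWithinAt ℝ f (Icc 0 b) x)
    (hf' : ∀ x ∈ Icc (0 : ℝ) b,
      DifferentiableWithinAt ℝ (fun y => derivWithin f (Icc 0 b) y) (Icc 0 b) x)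
    (hf'' : ∀ x ∈ Icc (0 : ℝ) b,
      derivWithin (fun y => derivWithin f (Icc 0 b) y) (Icc 0 b) x
        = ((V x : ℂ) - k ^ 2) * f x)
    (hg : ∀ x ∈ Icc (0 : ℝ) b, DifferentiableWithinAt ℝ g (Icc 0 b) x)
    (hg' : ∀ x ∈ Icc (0 : ℝ) b,
      DifferentiableWithinAt ℝ (fun y => derivWithin g (Icc 0 b) y) (Icc 0 b) x)
    (hg'' : ∀ x ∈ Icc (0 : ℝ) b,
      derivWithin (fun y => derivWithin g (Icc 0 b) y) (Icc 0 b) x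
        = ((V x : ℂ) - (starRingEnd ℂ k) ^ 2) * g x)
    (hfb : f b = Complex.exp (Complex.I * k * (b : ℂ)))
    (hfb' : derivWithin f (Icc 0 b) b
      = Complex.I * k * Complex.exp (Complex.I * k * (b : ℂ)))
    (hgb : g b = Complex.exp (-Complex.I * (starRingEnd ℂ k) * (b : ℂ)))
    (hgb' : derivWithin g (Icc 0 b) b
      = -Complex.I * (starRingEnd ℂ k)
        * Complex.exp (-Complex.I * (starRingEnd ℂ k) * (b : ℂ))) :
    (∀ x ∈ Icc (0 : ℝ) b, f x = starRingEnd ℂ (g x)) ∧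
    (f 0 = 0 ↔ g 0 = 0) := by
  -- clamped coefficient, globally bounded
  set c : ℝ → ℂ := fun t => ((V (projIcc 0 b hb.le t) : ℂ) - k ^ 2) with hc
  have hceq : ∀ x ∈ Icc (0 : ℝ) b, c x = (V x : ℂ) - k ^ 2 := by
    intro x hx
    simp only [hc]
    rw [projIcc_of_mem hb.le hx]
  have hc_cont : Continuous c :=
    (Complex.continuous_ofReal.comp (hV.comp (continuous_subtype_val.comp continuous_projIcc))).sub
      continuous_const
  obtain ⟨x0, hx0mem, hx0⟩ := isCompact_Icc.exists_isMaxOn (nonempty_Icc.mpr hb.le)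
    ((continuous_norm.comp hc_cont).continuousOn (s := Icc (0:ℝ) b))
  set M : ℝ := ‖c x0‖ with hM
  have hcb : ∀ t, ‖c t‖ ≤ M := by
    intro t
    have : c t = c (projIcc 0 b hb.le t) := by
      simp only [hc]
      rw [projIcc_of_mem hb.le (projIcc 0 b hb.le t).2]
    rw [this]
    exact hx0 (projIcc 0 b hb.le t).2
  have hM0 : 0 ≤ M := (norm_nonneg _)
  -- the vector field
  set v : ℝ → ℂ × ℂ → ℂ × ℂ := fun t p => (p.2, c t * p.1) with hv_def
  set K : NNReal := Real.toNNReal (max 1 M) with hK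
  have hKcoe : (K : ℝ) = max 1 M := Real.coe_toNNReal _ (le_trans zero_le_one (le_max_left _ _))
  have hlip : ∀ t, LipschitzOnWith K (v t) univ := by
    intro t
    apply LipschitzWith.lipschitzOnWith
    apply LipschitzWith.of_dist_le_mul
    intro p q
    rw [hKcoe, Prod.dist_eq, Prod.dist_eq]
    have h2 : dist (c t * p.1) (c t * q.1) = ‖c t‖ * dist p.1 q.1 := by
      rw [dist_eq_norm, dist_eq_norm, ← mul_sub, norm_mul]
    simp only [hv_def]
    rw [h2]
    have d1 : (0:ℝ) ≤ dist p.1 q.1 := dist_nonneg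
    have d2 : (0:ℝ) ≤ dist p.2 q.2 := dist_nonneg
    have l1 : dist p.1 q.1 ≤ max (dist p.1 q.1) (dist p.2 q.2) := le_max_left _ _
    have l2 : dist p.2 q.2 ≤ max (dist p.1 q.1) (dist p.2 q.2) := le_max_right _ _
    have m1 : (1:ℝ) ≤ max 1 M := le_max_left _ _
    have m2 : M ≤ max 1 M := le_max_right _ _
    have hct : ‖c t‖ ≤ M := hcb t
    have hc0 : (0:ℝ) ≤ ‖c t‖ := norm_nonneg _
    apply max_le
    · nlinarith
    · nlinarith
  -- the two solutions of the first-order system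
  set F : ℝ → ℂ × ℂ := fun x => (f x, derivWithin f (Icc 0 b) x) with hF_def
  set G : ℝ → ℂ × ℂ :=
    fun x => (starRingEnd ℂ (g x), starRingEnd ℂ (derivWithin g (Icc 0 b) x)) with hG_def
  have conjD : ∀ (u : ℝ → ℂ) (d : ℂ) (x : ℝ), HasDerivWithinAt u d (Icc 0 b) x →
      HasDerivWithinAt (fun y => starRingEnd ℂ (u y)) (starRingEnd ℂ d) (Icc 0 b) x := by
    intro u d x h
    have := (Complex.conjCLE.toContinuousLinearMap.hasFDerivAt (x := u x)).comp_hasDerivWithinAt x h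
    exact this
  have hFd : ∀ x ∈ Icc (0 : ℝ) b, HasDerivWithinAt F (v x (F x)) (Icc 0 b) x := by
    intro x hx
    have h1 : HasDerivWithinAt f (derivWithin f (Icc 0 b) x) (Icc 0 b) x :=
      (hf x hx).hasDerivWithinAt
    have h2 : HasDerivWithinAt (fun y => derivWithin f (Icc 0 b) y)
        (derivWithin (fun y => derivWithin f (Icc 0 b) y) (Icc 0 b) x) (Icc 0 b) x :=
      (hf' x hx).hasDerivWithinAt
    rw [hf'' x hx] at h2
    have : v x (F x) = (derivWithin f (Icc 0 b) x, ((V x : ℂ) - k ^ 2) * f x) := by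
      simp only [hv_def, hF_def]
      rw [hceq x hx]
    rw [this]
    exact h1.prodMk h2
  have hGd : ∀ x ∈ Icc (0 : ℝ) b, HasDerivWithinAt G (v x (G x)) (Icc 0 b) x := by
    intro x hx
    have h1 : HasDerivWithinAt (fun y => starRingEnd ℂ (g y))
        (starRingEnd ℂ (derivWithin g (Icc 0 b) x)) (Icc 0 b) x :=
      conjD g _ x (hg x hx).hasDerivWithinAt
    have h2 : HasDerivWithinAt (fun y => starRingEnd ℂ (derivWithin g (Icc 0 b) y))
        (starRingEnd ℂ (derivWithin (fun y => derivWithin g (Icc 0 b) y) (Icc 0 b) x))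
        (Icc 0 b) x :=
      conjD _ _ x (hg' x hx).hasDerivWithinAt
    rw [hg'' x hx] at h2
    have h2' : starRingEnd ℂ (((V x : ℂ) - (starRingEnd ℂ k) ^ 2) * g x)
        = ((V x : ℂ) - k ^ 2) * starRingEnd ℂ (g x) := by
      simp [map_mul, map_sub, map_pow, Complex.conj_ofReal, Complex.conj_conj]
    rw [h2'] at h2
    have : v x (G x) = (starRingEnd ℂ (derivWithin g (Icc 0 b) x),
        ((V x : ℂ) - k ^ 2) * starRingEnd ℂ (g x)) := by
      simp only [hv_def, hG_def]
      rw [hceq x hx]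
    rw [this]
    exact h1.prodMk h2
  have hmemIic : ∀ t ∈ Ioc (0 : ℝ) b, Icc (0 : ℝ) b ∈ nhdsWithin t (Iic t) := by
    intro t ht
    exact mem_nhdsWithin.mpr ⟨Ioi 0, isOpen_Ioi, ht.1,
      fun y hy => ⟨hy.1.le, hy.2.trans ht.2⟩⟩
  have hFc : ContinuousOn F (Icc 0 b) :=
    ContinuousOn.prodMk (fun x hx => (hf x hx).continuousWithinAt)
      (fun x hx => (hf' x hx).continuousWithinAt)
  have hGc : ContinuousOn G (Icc 0 b) := by
    apply ContinuousOn.prodMk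
    · exact Complex.continuous_conj.comp_continuousOn
        (fun x hx => (hg x hx).continuousWithinAt)
    · exact Complex.continuous_conj.comp_continuousOn
        (fun x hx => (hg' x hx).continuousWithinAt)
  have hFGb : F b = G b := by
    have hbmem : b ∈ Icc (0 : ℝ) b := right_mem_Icc.mpr hb.le
    have e1 : starRingEnd ℂ (g b) = Complex.exp (Complex.I * k * (b : ℂ)) := by
      rw [hgb, ← Complex.exp_conj]
      congr 1
      simp [map_mul, map_neg, Complex.conj_I, Complex.conj_ofReal]
    have e2 : starRingEnd ℂ (derivWithin g (Icc 0 b) b)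
        = Complex.I * k * Complex.exp (Complex.I * k * (b : ℂ)) := by
      rw [hgb', map_mul, ← Complex.exp_conj]
      have : starRingEnd ℂ (-Complex.I * starRingEnd ℂ k) = Complex.I * k := by
        simp [map_mul, map_neg, Complex.conj_I, Complex.conj_conj]
      rw [this]
      congr 2
      simp [map_mul, map_neg, Complex.conj_I, Complex.conj_ofReal]
    simp only [hF_def, hG_def, Prod.mk.injEq]
    exact ⟨by rw [hfb, e1], by rw [hfb', e2]⟩
  have hEq : EqOn F G (Icc 0 b) := by
    apply ODE_solution_unique_of_mem_Icc_left (v := v) (s := fun _ => univ) (fun t _ => hlip t) hFc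
      (fun t ht => (hFd t ⟨ht.1.le, ht.2⟩).mono_of_mem_nhdsWithin (hmemIic t ht))
      (fun t _ => mem_univ _) hGc
      (fun t ht => (hGd t ⟨ht.1.le, ht.2⟩).mono_of_mem_nhdsWithin (hmemIic t ht))
      (fun t _ => mem_univ _) hFGb
  have hmain : ∀ x ∈ Icc (0 : ℝ) b, f x = starRingEnd ℂ (g x) := by
    intro x hx
    have := hEq hx
    simpa only [hF_def, hG_def, Prod.mk.injEq] using congrArg Prod.fst this
  refine ⟨hmain, ?_⟩
  have h0 : f 0 = starRingEnd ℂ (g 0) := hmain 0 (left_mem_Icc.mpr hb.le)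
  rw [h0]
  exact map_eq_zero _
end
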